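/- arXiv:2005.11894 — 11 statements merged into one kernel-verified Lean document; each statement's English description precedes it below -/
import Mathlib

section
/- Let n, k ∈ ℕ with 1 ≤ k ≤ n−1 and m : [n] → ℕ. Then Σ_{i=1}^{n} ( m_i + (n−k−1)·⌈m_i/k⌉ ) is the least value of the total Σ_{i=1}^{n} Σ_{j∈[n], j≠i} γ_{i,j} over all feasible families γ: some feasible γ attains this value, and every feasible γ has total at least this value. Equivalently, the minimum update bandwidth of (n,k,m) irregular array codes is γ_min = (1/n)·( Σ_{i=1}^n m_i + (n−k−1)·Σ_{i=1}^n ⌈m_i/k⌉ ). -/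
/-!
The constraints decouple into one problem per node `i`: as `E` ranges over the `(n-k)`-sets
containing `i`, `Eᶜ` ranges over the `k`-subsets of the other `n - 1` nodes, so row `γ i` must
give every such `k`-set a sum of at least `m i`. Put `c = ⌈m i / k⌉`. For the lower bound, take
a `k`-set `S` of minimal sum; some entry of `S` is at least `c` by pigeonhole, and by an exchange
argument every entry outside `S` dominates every entry of `S`, so the row total is at least
`m i + (n - 1 - k) c`. This is attained by setting every entry to `c` except `k c - m i < k` of
them, which are set to `c - 1`.
-/

open Finset

namespace Nat

theorem ceil_natCast_div_le_iff {a k : ℕ} (hk : 0 < k) (x : ℕ) :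
    ⌈(a : ℚ) / k⌉₊ ≤ x ↔ a ≤ k * x := by
  rw [Nat.ceil_le, div_le_iff₀ (by exact_mod_cast hk)]
  norm_cast
  rw [mul_comm]

theorem le_mul_ceil_natCast_div {a k : ℕ} (hk : 0 < k) : a ≤ k * ⌈(a : ℚ) / k⌉₊ :=
  (ceil_natCast_div_le_iff hk _).1 le_rfl

theorem mul_ceil_natCast_div_lt_add {a k : ℕ} (hk : 0 < k) : k * ⌈(a : ℚ) / k⌉₊ < a + k := by
  set c := ⌈(a : ℚ) / k⌉₊ with hc
  rcases Nat.eq_zero_or_pos c with hc0 | hcpos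
  · rw [hc0]; omega
  have hlt : ¬ c ≤ c - 1 := by omega
  rw [hc, ceil_natCast_div_le_iff hk, ← hc, Nat.mul_sub_one] at hlt
  omega

end Nat

section KSubsetSums

variable {α : Type*} [DecidableEq α] {k a : ℕ} {T : Finset α} {f : α → ℕ}

theorem le_of_forall_sum_le_sum_powersetCard {S : Finset α} (hS : S ∈ powersetCard k T)
    (hmin : ∀ S' ∈ powersetCard k T, ∑ j ∈ S, f j ≤ ∑ j ∈ S', f j)
    {i j : α} (hi : i ∈ S) (hj : j ∈ T \ S) : f i ≤ f j := by
  obtain ⟨hST, hSk⟩ := mem_powersetCard.1 hS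
  obtain ⟨hjT, hjS⟩ := mem_sdiff.1 hj
  have hj' : j ∉ S.erase i := fun h ↦ hjS (mem_of_mem_erase h)
  have hswap : insert j (S.erase i) ∈ powersetCard k T := by
    refine mem_powersetCard.2 ⟨insert_subset hjT ((erase_subset i S).trans hST), ?_⟩
    rw [card_insert_of_notMem hj', card_erase_of_mem hi, hSk]
    have : 0 < k := hSk ▸ card_pos.2 ⟨i, hi⟩
    omega
  have := hmin _ hswap
  rw [sum_insert hj', ← add_sum_erase S f hi] at this
  omega

theorem add_mul_ceil_div_le_sum (hk : 0 < k) (hkT : k ≤ #T)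
    (h : ∀ S ⊆ T, #S = k → a ≤ ∑ j ∈ S, f j) :
    a + (#T - k) * ⌈(a : ℚ) / k⌉₊ ≤ ∑ j ∈ T, f j := by
  obtain ⟨S, hS, hmin⟩ := exists_min_image (powersetCard k T) (fun S ↦ ∑ j ∈ S, f j)
    (powersetCard_nonempty.2 hkT)
  obtain ⟨hST, hSk⟩ := mem_powersetCard.1 hS
  have hSa : a ≤ ∑ j ∈ S, f j := h S hST hSk
  obtain ⟨i, hiS, hi⟩ : ∃ i ∈ S, a ≤ k * f i := by
    refine exists_le_of_sum_le (card_pos.1 (hSk ▸ hk)) ?_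
    rw [sum_const, hSk, smul_eq_mul, ← mul_sum]
    exact Nat.mul_le_mul_left k hSa
  have hc : ⌈(a : ℚ) / k⌉₊ ≤ f i := (Nat.ceil_natCast_div_le_iff hk _).2 hi
  have hrest : (#T - k) * ⌈(a : ℚ) / k⌉₊ ≤ ∑ j ∈ T \ S, f j := by
    have := card_nsmul_le_sum (T \ S) f _ fun j hj ↦
      hc.trans (le_of_forall_sum_le_sum_powersetCard hS hmin hiS hj)
    rwa [card_sdiff_of_subset hST, hSk, smul_eq_mul] at this
  rw [← sum_sdiff hST]
  omega

theorem exists_forall_card_eq_le_sum (hk : 0 < k) (hkT : k ≤ #T) :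
    ∃ f : α → ℕ, (∀ S : Finset α, #S = k → a ≤ ∑ j ∈ S, f j) ∧
      ∑ j ∈ T, f j = a + (#T - k) * ⌈(a : ℚ) / k⌉₊ := by
  set c := ⌈(a : ℚ) / k⌉₊
  have hac : a ≤ k * c := Nat.le_mul_ceil_natCast_div hk
  have hca : k * c < a + k := Nat.mul_ceil_natCast_div_lt_add hk
  obtain ⟨D, hDT, hD⟩ := exists_subset_card_eq (s := T) (n := k * c - a) (by omega)
  have hc : D.Nonempty → 0 < c := fun hne ↦ by
    have := hD ▸ card_pos.2 hne
    exact Nat.pos_of_mul_pos_left (by omega : 0 < k * c)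
  let f : α → ℕ := fun j ↦ if j ∈ D then c - 1 else c
  have hsum (S : Finset α) : ∑ j ∈ S, f j + #(S ∩ D) = #S * c := by
    rw [← filter_mem_eq_inter, card_filter, ← sum_add_distrib, ← smul_eq_mul, ← sum_const]
    refine sum_congr rfl fun j _ ↦ ?_
    by_cases hj : j ∈ D
    · simp only [f, hj, if_true]
      have := hc ⟨j, hj⟩
      omega
    · simp [f, hj]
  refine ⟨f, fun S hS ↦ ?_, ?_⟩
  · have := hsum S
    have := card_le_card (inter_subset_right (s₁ := S) (s₂ := D))
    rw [hS] at *
    omega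
  · have := hsum T
    rw [inter_eq_right.2 hDT, hD] at this
    rw [Nat.sub_mul]
    have : k * c ≤ #T * c := Nat.mul_le_mul_right c hkT
    omega

end KSubsetSums

theorem forall_compl_card_eq_iff {α : Type*} [Fintype α] [DecidableEq α] {k : ℕ}
    (hk : k ≤ Fintype.card α) (P : α → Finset α → Prop) :
    (∀ E : Finset α, #E = Fintype.card α - k → ∀ i ∈ E, P i Eᶜ) ↔
      ∀ i, ∀ S ⊆ univ.erase i, #S = k → P i S := by
  constructor
  · intro h i S hS hSk
    have hiS : i ∈ Sᶜ := mem_compl.2 fun hi ↦ by simpa using hS hi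
    simpa using h Sᶜ (by rw [card_compl, hSk]) i hiS
  · intro h E hE i hi
    refine h i Eᶜ (fun j hj ↦ mem_erase.2 ⟨?_, mem_univ j⟩) (by rw [card_compl, hE]; omega)
    rintro rfl
    exact mem_compl.1 hj hi

/-- The minimum total update bandwidth of `(n,k,m)` irregular array codes:
`∑ i (m i + (n-k-1)·⌈m i / k⌉)` is the least value of `∑ i ∑_{j ≠ i} γ i j`
over all feasible families `γ`. -/
theorem stmt2 (n k : ℕ) (hk1 : 1 ≤ k) (hk2 : k ≤ n - 1) (m : Fin n → ℕ) :
    IsLeast {t : ℕ | ∃ γ : Fin n → Fin n → ℕ,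
        (∀ E : Finset (Fin n), E.card = n - k →
          ∀ i ∈ E, m i ≤ ∑ j ∈ Eᶜ, γ i j) ∧
        t = ∑ i, ∑ j ∈ Finset.univ.erase i, γ i j}
      (∑ i, (m i + (n - k - 1) * ⌈(m i : ℚ) / (k : ℚ)⌉₊)) := by
  have hcard (i : Fin n) : #(univ.erase i) = n - 1 := by simp
  have hkn : k ≤ Fintype.card (Fin n) := by simp; omega
  have hrow (i : Fin n) : k ≤ #(univ.erase i) := hcard i ▸ hk2
  have hcoeff (i : Fin n) : #(univ.erase i) - k = n - k - 1 := by rw [hcard]; omega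
  constructor
  · choose γ hγ htotal using fun i : Fin n ↦
      exists_forall_card_eq_le_sum (a := m i) (T := univ.erase i) hk1 (hrow i)
    refine ⟨γ, ?_, ?_⟩
    · simpa using (forall_compl_card_eq_iff hkn (fun i S ↦ m i ≤ ∑ j ∈ S, γ i j)).2
        fun i S _ hS ↦ hγ i S hS
    · simp only [htotal, hcoeff]
  · rintro t ⟨γ, hγ, rfl⟩
    have hγ' := (forall_compl_card_eq_iff hkn (fun i S ↦ m i ≤ ∑ j ∈ S, γ i j)).1
      (by simpa using hγ)
    refine sum_le_sum fun i _ ↦ ?_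
    rw [← hcoeff i]
    exact add_mul_ceil_div_le_sum hk1 (hrow i) (hγ' i)
end

section
/- Let n, k ∈ ℕ with 1 ≤ k < n−1 and m : [n] → ℕ, and for each i set w_i = k·⌈m_i/k⌉ − m_i (so 0 ≤ w_i < k). Suppose the family γ is feasible and attains the minimum total, Σ_{i=1}^{n} Σ_{j≠i} γ_{i,j} = Σ_{i=1}^{n} ( m_i + (n−k−1)·⌈m_i/k⌉ ). Then for every i ∈ [n] there exists a bijection σ from {1,…,n−1} onto [n]∖{i} such that u ↦ γ_{i,σ(u)} is nondecreasing, γ_{i,σ(u)} = ⌈m_i/k⌉ for every u with w_i < u ≤ n−1, and Σ_{u=1}^{w_i} γ_{i,σ(u)} = w_i·⌊m_i/k⌋. -/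
open Finset

private lemma ceil_facts (k M : ℕ) (hk : 0 < k) :
    M ≤ k * ⌈(M : ℚ) / (k : ℚ)⌉₊ ∧ k * ⌈(M : ℚ) / (k : ℚ)⌉₊ < M + k := by
  have hkq : (0 : ℚ) < k := by positivity
  set c := ⌈(M : ℚ) / (k : ℚ)⌉₊ with hc
  constructor
  · have h := Nat.le_ceil ((M : ℚ) / (k : ℚ))
    rw [div_le_iff₀ hkq] at h
    have h2 : (M : ℚ) ≤ ((k * c : ℕ) : ℚ) := by push_cast; linarith
    exact_mod_cast h2
  · have h : (c : ℚ) < (M : ℚ) / (k : ℚ) + 1 := Nat.ceil_lt_add_one (by positivity)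
    rw [div_add' _ _ _ (ne_of_gt hkq), lt_div_iff₀ hkq] at h
    have h2 : ((k * c : ℕ) : ℚ) < ((M + k : ℕ) : ℚ) := by push_cast; linarith
    exact_mod_cast h2

private lemma ceil_floor (k M : ℕ) (hk : 0 < k) (h : M < k * ⌈(M : ℚ) / (k : ℚ)⌉₊) :
    ⌈(M : ℚ) / (k : ℚ)⌉₊ = M / k + 1 := by
  have hkq : (0 : ℚ) < k := by positivity
  set c := ⌈(M : ℚ) / (k : ℚ)⌉₊ with hc
  have hmod := Nat.div_add_mod M k
  have hmlt : M % k < k := Nat.mod_lt _ hk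
  have h1 : c ≤ M / k + 1 := by
    rw [hc, Nat.ceil_le, div_le_iff₀ hkq]
    have h3 : (M : ℚ) ≤ ((k * (M / k) + k : ℕ) : ℚ) := by exact_mod_cast (by linarith : M ≤ k * (M / k) + k)
    push_cast at h3 ⊢
    linarith
  have h2 : M / k + 1 ≤ c := by
    by_contra hcon
    push_neg at hcon
    have hle : c ≤ M / k := Nat.lt_succ_iff.mp hcon
    have h4 : k * c ≤ k * (M / k) := Nat.mul_le_mul_left _ hle
    have h5 : k * (M / k) ≤ M := Nat.mul_div_le M k
    linarith
  exact le_antisymm h1 h2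


private lemma card_filt' {N a : ℕ} (h : a < N) :
    (Finset.univ.filter fun u : Fin N => (u : ℕ) < a).card = a := by
  have : (Finset.univ.filter fun u : Fin N => (u : ℕ) < a) = Finset.Iio ⟨a, h⟩ := by
    ext u; simp [Fin.lt_def]
  rw [this, Fin.card_Iio]

private lemma ge_of_first {N k c M : ℕ} (hkN : k < N)
    (g : Fin N → ℕ) (hmono : Monotone g)
    (hwk : k * c < M + k)
    (hfirst : M ≤ ∑ u ∈ Finset.univ.filter (fun u : Fin N => (u : ℕ) < k), g u)
    {u : Fin N} (hu : k ≤ (u : ℕ)) : c ≤ g u := by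
  have hsum : ∑ v ∈ Finset.univ.filter (fun v : Fin N => (v : ℕ) < k), g v ≤ k * g u := by
    calc ∑ v ∈ Finset.univ.filter (fun v : Fin N => (v : ℕ) < k), g v
        ≤ ∑ _v ∈ Finset.univ.filter (fun v : Fin N => (v : ℕ) < k), g u :=
          Finset.sum_le_sum fun v hv => hmono (by
            have hvk : (v : ℕ) < k := by simpa using hv
            exact le_of_lt (by rw [Fin.lt_def]; omega))
      _ = k * g u := by rw [Finset.sum_const, card_filt' hkN, smul_eq_mul]
  by_contra hlt
  push_neg at hlt
  have h2 : k * (g u + 1) ≤ k * c := Nat.mul_le_mul_left _ hlt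
  have h3 : k * (g u + 1) = k * g u + k := by ring
  linarith

private lemma card_nfilt {N k : ℕ} (hkN : k < N) :
    (Finset.univ.filter fun u : Fin N => ¬ (u : ℕ) < k).card = N - k := by
  have h := Finset.card_filter_add_card_filter_not
    (s := (Finset.univ : Finset (Fin N))) (p := fun u : Fin N => (u : ℕ) < k)
  rw [card_filt' hkN, Finset.card_univ, Fintype.card_fin] at h
  omega

private lemma row_lb {N k c M : ℕ} (hkN : k < N)
    (g : Fin N → ℕ) (hmono : Monotone g)
    (hwk : k * c < M + k)
    (hfirst : M ≤ ∑ u ∈ Finset.univ.filter (fun u : Fin N => (u : ℕ) < k), g u) :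
    M + (N - k) * c ≤ ∑ u, g u := by
  have hsplit := Finset.sum_filter_add_sum_filter_not Finset.univ
    (fun u : Fin N => (u : ℕ) < k) g
  have h2 : (N - k) * c ≤ ∑ u ∈ Finset.univ.filter (fun u : Fin N => ¬ (u : ℕ) < k), g u := by
    calc (N - k) * c
        = ∑ _u ∈ Finset.univ.filter (fun u : Fin N => ¬ (u : ℕ) < k), c := by
          rw [Finset.sum_const, card_nfilt hkN, smul_eq_mul]
      _ ≤ _ := Finset.sum_le_sum fun u hu =>
          ge_of_first hkN g hmono hwk hfirst
            (Nat.le_of_not_lt (by simpa using (Finset.mem_filter.mp hu).2))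
  linarith

private lemma key {N k c M w : ℕ} (hkN : k < N)
    (g : Fin N → ℕ) (hmono : Monotone g)
    (hw1 : w + M = k * c) (hw2 : w < k)
    (hfirst : M ≤ ∑ u ∈ Finset.univ.filter (fun u : Fin N => (u : ℕ) < k), g u)
    (htot : ∑ u, g u = M + (N - k) * c) :
    (∀ u : Fin N, w ≤ (u : ℕ) → g u = c) ∧
    (∑ u ∈ Finset.univ.filter (fun u : Fin N => (u : ℕ) < w), g u)
      + (k - w) * c = M := by
  have hwk : k * c < M + k := by linarith
  have hsplit := Finset.sum_filter_add_sum_filter_not Finset.univ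
    (fun u : Fin N => (u : ℕ) < k) g
  have h2 : (N - k) * c ≤ ∑ u ∈ Finset.univ.filter (fun u : Fin N => ¬ (u : ℕ) < k), g u := by
    calc (N - k) * c
        = ∑ _u ∈ Finset.univ.filter (fun u : Fin N => ¬ (u : ℕ) < k), c := by
          rw [Finset.sum_const, card_nfilt hkN, smul_eq_mul]
      _ ≤ _ := Finset.sum_le_sum fun u hu =>
          ge_of_first hkN g hmono hwk hfirst
            (Nat.le_of_not_lt (by simpa using (Finset.mem_filter.mp hu).2))
  have hs1 : ∑ u ∈ Finset.univ.filter (fun u : Fin N => (u : ℕ) < k), g u = M := by linarith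
  have hs2 : ∑ u ∈ Finset.univ.filter (fun u : Fin N => ¬ (u : ℕ) < k), g u = (N - k) * c := by
    linarith
  have hBc : ∀ u : Fin N, k ≤ (u : ℕ) → g u = c := by
    have hle : ∀ v ∈ Finset.univ.filter (fun v : Fin N => ¬ (v : ℕ) < k),
        (fun _ : Fin N => c) v ≤ g v := fun v hv =>
      ge_of_first hkN g hmono hwk hfirst
        (Nat.le_of_not_lt (by simpa using (Finset.mem_filter.mp hv).2))
    have heq := (Finset.sum_eq_sum_iff_of_le hle).mp
      (by rw [Finset.sum_const, card_nfilt hkN, smul_eq_mul, hs2])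
    exact fun u hu =>
      (heq u (Finset.mem_filter.mpr ⟨Finset.mem_univ u, Nat.not_lt.mpr hu⟩)).symm
  have hgk : g ⟨k, hkN⟩ = c := hBc ⟨k, hkN⟩ (by simp)
  have hlec : ∀ u : Fin N, (u : ℕ) < k → g u ≤ c := by
    intro u hu
    calc g u ≤ g ⟨k, hkN⟩ := hmono (by rw [Fin.le_def]; simpa using le_of_lt hu)
      _ = c := hgk
  have hmain : ∀ u : Fin N, w ≤ (u : ℕ) → g u = c := by
    intro u hu
    by_cases hk' : k ≤ (u : ℕ)
    · exact hBc u hk'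
    push_neg at hk'
    refine le_antisymm (hlec u hk') ?_
    by_contra hcon
    push_neg at hcon
    have htN : (u : ℕ) + 1 < N := by omega
    have hsplit2 := Finset.sum_filter_add_sum_filter_not
      (Finset.univ.filter (fun v : Fin N => (v : ℕ) < k))
      (fun v : Fin N => (v : ℕ) ≤ (u : ℕ)) g
    have hA1 : (Finset.univ.filter (fun v : Fin N => (v : ℕ) < k)).filter
        (fun v : Fin N => (v : ℕ) ≤ (u : ℕ))
        = Finset.univ.filter (fun v : Fin N => (v : ℕ) < (u : ℕ) + 1) := by
      ext v; simp only [Finset.mem_filter, Finset.mem_univ, true_and]; omega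
    have hcard1 : ((Finset.univ.filter (fun v : Fin N => (v : ℕ) < k)).filter
        (fun v : Fin N => (v : ℕ) ≤ (u : ℕ))).card = (u : ℕ) + 1 := by
      rw [hA1]; exact card_filt' htN
    have hcard2 : ((Finset.univ.filter (fun v : Fin N => (v : ℕ) < k)).filter
        (fun v : Fin N => ¬ (v : ℕ) ≤ (u : ℕ))).card = k - ((u : ℕ) + 1) := by
      have h := Finset.card_filter_add_card_filter_not
        (s := Finset.univ.filter (fun v : Fin N => (v : ℕ) < k))
        (p := fun v : Fin N => (v : ℕ) ≤ (u : ℕ))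
      rw [hcard1, card_filt' (show k < N from hkN)] at h
      omega
    have hb1 : ∑ v ∈ (Finset.univ.filter (fun v : Fin N => (v : ℕ) < k)).filter
        (fun v : Fin N => (v : ℕ) ≤ (u : ℕ)), g v ≤ ((u : ℕ) + 1) * g u := by
      have h7 := Finset.sum_le_card_nsmul
        ((Finset.univ.filter (fun v : Fin N => (v : ℕ) < k)).filter
          (fun v : Fin N => (v : ℕ) ≤ (u : ℕ))) g (g u)
        (fun v hv => hmono (by rw [Fin.le_def]; exact (Finset.mem_filter.mp hv).2))
      rwa [hcard1, smul_eq_mul] at h7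
    have hb2 : ∑ v ∈ (Finset.univ.filter (fun v : Fin N => (v : ℕ) < k)).filter
        (fun v : Fin N => ¬ (v : ℕ) ≤ (u : ℕ)), g v ≤ (k - ((u : ℕ) + 1)) * c := by
      have h7 := Finset.sum_le_card_nsmul
        ((Finset.univ.filter (fun v : Fin N => (v : ℕ) < k)).filter
          (fun v : Fin N => ¬ (v : ℕ) ≤ (u : ℕ))) g c
        (fun v hv => hlec v (Finset.mem_filter.mp (Finset.mem_filter.mp hv).1).2)
      rwa [hcard2, smul_eq_mul] at h7
    have hM : M ≤ ((u : ℕ) + 1) * g u + (k - ((u : ℕ) + 1)) * c := by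
      rw [← hs1, ← hsplit2]; exact Nat.add_le_add hb1 hb2
    have hp1 : ((u : ℕ) + 1) * g u + ((u : ℕ) + 1) ≤ ((u : ℕ) + 1) * c := by
      have h5 : ((u : ℕ) + 1) * (g u + 1) ≤ ((u : ℕ) + 1) * c := Nat.mul_le_mul_left _ hcon
      have h6 : ((u : ℕ) + 1) * (g u + 1) = ((u : ℕ) + 1) * g u + ((u : ℕ) + 1) := by ring
      linarith
    have hp2 : ((u : ℕ) + 1) * c + (k - ((u : ℕ) + 1)) * c = k * c := by
      rw [← Nat.add_mul]
      congr 1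
      omega
    linarith
  refine ⟨hmain, ?_⟩
  have hsplit3 := Finset.sum_filter_add_sum_filter_not
    (Finset.univ.filter (fun v : Fin N => (v : ℕ) < k))
    (fun v : Fin N => (v : ℕ) < w) g
  have hA1 : (Finset.univ.filter (fun v : Fin N => (v : ℕ) < k)).filter
      (fun v : Fin N => (v : ℕ) < w) = Finset.univ.filter (fun v : Fin N => (v : ℕ) < w) := by
    ext v; simp only [Finset.mem_filter, Finset.mem_univ, true_and]; omega
  have hcard2 : ((Finset.univ.filter (fun v : Fin N => (v : ℕ) < k)).filter
      (fun v : Fin N => ¬ (v : ℕ) < w)).card = k - w := by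
    have h := Finset.card_filter_add_card_filter_not
      (s := Finset.univ.filter (fun v : Fin N => (v : ℕ) < k))
      (p := fun v : Fin N => (v : ℕ) < w)
    rw [hA1, card_filt' (show w < N by omega), card_filt' (show k < N from hkN)] at h
    omega
  have hconst : ∑ v ∈ (Finset.univ.filter (fun v : Fin N => (v : ℕ) < k)).filter
      (fun v : Fin N => ¬ (v : ℕ) < w), g v = (k - w) * c := by
    rw [Finset.sum_congr rfl (fun v hv => hmain v (Nat.le_of_not_lt (Finset.mem_filter.mp hv).2)),
      Finset.sum_const, hcard2, smul_eq_mul]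
  rw [hA1, hconst, hs1] at hsplit3
  exact hsplit3

/-- Structure of the minimizers of the update bandwidth when `1 ≤ k < n-1`:
any feasible `γ` attaining the minimum total must, for each node `i`, take the
value `⌈m i / k⌉` on the largest `n-1-w_i` transmissions, and the `w_i` smallest
transmissions sum to `w_i·⌊m i / k⌋`, where `w_i = k·⌈m i / k⌉ - m i`. -/
theorem stmt3 (n k : ℕ) (hk1 : 1 ≤ k) (hk2 : k < n - 1) (m : Fin n → ℕ)
    (γ : Fin n → Fin n → ℕ)
    (hfeas : ∀ E : Finset (Fin n), E.card = n - k →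
      ∀ i ∈ E, m i ≤ ∑ j ∈ Eᶜ, γ i j)
    (hmin : ∑ i, ∑ j ∈ Finset.univ.erase i, γ i j
      = ∑ i, (m i + (n - k - 1) * ⌈(m i : ℚ) / (k : ℚ)⌉₊)) :
    ∀ i : Fin n, ∃ σ : Fin (n - 1) ≃ {j : Fin n // j ≠ i},
      Monotone (fun u => γ i (σ u).1) ∧
      (∀ u : Fin (n - 1), k * ⌈(m i : ℚ) / (k : ℚ)⌉₊ - m i ≤ (u : ℕ) →
        γ i (σ u).1 = ⌈(m i : ℚ) / (k : ℚ)⌉₊) ∧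
      (∑ u ∈ Finset.univ.filter
          (fun u : Fin (n - 1) => (u : ℕ) < k * ⌈(m i : ℚ) / (k : ℚ)⌉₊ - m i),
          γ i (σ u).1
        = (k * ⌈(m i : ℚ) / (k : ℚ)⌉₊ - m i) * (m i / k)) := by
  have hk0 : 0 < k := hk1
  have hcard : ∀ i : Fin n, Fintype.card {j : Fin n // j ≠ i} = n - 1 := fun i => by
    simp [ne_eq, Fintype.card_subtype_compl, Fintype.card_subtype_eq]
  let e : ∀ i : Fin n, Fin (n - 1) ≃ {j : Fin n // j ≠ i} :=
    fun i => (Fintype.equivFinOfCardEq (hcard i)).symm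
  let σ : ∀ i : Fin n, Fin (n - 1) ≃ {j : Fin n // j ≠ i} :=
    fun i => (Tuple.sort (fun u => γ i ((e i u) : Fin n))).trans (e i)
  have hmono : ∀ i, Monotone (fun u => γ i ((σ i u) : Fin n)) :=
    fun i => Tuple.monotone_sort (fun u => γ i ((e i u) : Fin n))
  have hfirst : ∀ i : Fin n, m i ≤ ∑ u ∈ Finset.univ.filter
      (fun u : Fin (n - 1) => (u : ℕ) < k), γ i ((σ i u) : Fin n) := by
    intro i
    have hinj : ∀ a ∈ Finset.univ.filter (fun u : Fin (n - 1) => (u : ℕ) < k),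
        ∀ b ∈ Finset.univ.filter (fun u : Fin (n - 1) => (u : ℕ) < k),
        ((σ i a) : Fin n) = ((σ i b) : Fin n) → a = b :=
      fun a _ b _ h => (σ i).injective (Subtype.ext h)
    have hTcard : ((Finset.univ.filter (fun u : Fin (n - 1) => (u : ℕ) < k)).image
        (fun u => ((σ i u) : Fin n))).card = k := by
      rw [Finset.card_image_of_injOn hinj, card_filt' hk2]
    have hiT : i ∉ (Finset.univ.filter (fun u : Fin (n - 1) => (u : ℕ) < k)).image
        (fun u => ((σ i u) : Fin n)) := by
      intro hmem
      rw [Finset.mem_image] at hmem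
      obtain ⟨u, -, hu⟩ := hmem
      exact (σ i u).2 hu
    have hE : (((Finset.univ.filter (fun u : Fin (n - 1) => (u : ℕ) < k)).image
        (fun u => ((σ i u) : Fin n)))ᶜ).card = n - k := by
      rw [Finset.card_compl, hTcard, Fintype.card_fin]
    have h := hfeas _ hE i (Finset.mem_compl.mpr hiT)
    rwa [compl_compl, Finset.sum_image hinj] at h
  have hrow : ∀ i : Fin n, ∑ j ∈ Finset.univ.erase i, γ i j
      = ∑ u, γ i ((σ i u) : Fin n) := by
    intro i
    have h1 : ∑ u, γ i ((σ i u) : Fin n) = ∑ j : {j : Fin n // j ≠ i}, γ i (j : Fin n) :=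
      Equiv.sum_comp (σ i) (fun j : {j : Fin n // j ≠ i} => γ i (j : Fin n))
    have h2 : ∑ j ∈ Finset.univ.erase i, γ i j
        = ∑ j : {j : Fin n // j ≠ i}, γ i (j : Fin n) :=
      Finset.sum_subtype (Finset.univ.erase i)
        (fun j => by simp [Finset.mem_erase]) (fun j => γ i j)
    rw [h1, h2]
  have hcfact := fun i : Fin n => ceil_facts k (m i) hk0
  have hsub : n - 1 - k = n - k - 1 := by omega
  have hlb : ∀ i ∈ Finset.univ,
      m i + (n - k - 1) * ⌈(m i : ℚ) / (k : ℚ)⌉₊ ≤ ∑ j ∈ Finset.univ.erase i, γ i j := by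
    intro i _
    rw [hrow i]
    have h := row_lb hk2 (fun u => γ i ((σ i u) : Fin n)) (hmono i) (hcfact i).2 (hfirst i)
    rwa [hsub] at h
  have heq := (Finset.sum_eq_sum_iff_of_le hlb).mp hmin.symm
  intro i
  have htot : ∑ u, γ i ((σ i u) : Fin n)
      = m i + (n - 1 - k) * ⌈(m i : ℚ) / (k : ℚ)⌉₊ := by
    rw [← hrow i, ← heq i (Finset.mem_univ i), hsub]
  have hw1 : (k * ⌈(m i : ℚ) / (k : ℚ)⌉₊ - m i) + m i = k * ⌈(m i : ℚ) / (k : ℚ)⌉₊ :=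
    Nat.sub_add_cancel (hcfact i).1
  have hw2 : k * ⌈(m i : ℚ) / (k : ℚ)⌉₊ - m i < k := by
    have h := (hcfact i).2
    have h' := (hcfact i).1
    omega
  obtain ⟨h1, h2⟩ := key hk2 (fun u => γ i ((σ i u) : Fin n)) (hmono i) hw1 hw2
    (hfirst i) htot
  refine ⟨σ i, hmono i, h1, ?_⟩
  by_cases hw0 : k * ⌈(m i : ℚ) / (k : ℚ)⌉₊ - m i = 0
  · rw [hw0] at h2 ⊢
    simpa using h2
  · have hc : ⌈(m i : ℚ) / (k : ℚ)⌉₊ = m i / k + 1 :=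
      ceil_floor k (m i) hk0 (by omega)
    have hc' : ((⌈(m i : ℚ) / (k : ℚ)⌉₊ : ℕ) : ℤ) = ((m i / k : ℕ) : ℤ) + 1 := by
      exact_mod_cast hc
    obtain ⟨Ss, hSs⟩ : ∃ s, s = ∑ u ∈ Finset.univ.filter
        (fun u : Fin (n - 1) => (u : ℕ) < k * ⌈(m i : ℚ) / (k : ℚ)⌉₊ - m i),
        γ i ((σ i u) : Fin n) := ⟨_, rfl⟩
    rw [← hSs] at h2 ⊢
    zify [hw2.le, (hcfact i).1] at h2
    have hgoal : ((Ss : ℕ) : ℤ)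
        = ((k * ⌈(m i : ℚ) / (k : ℚ)⌉₊ - m i : ℕ) : ℤ) * ((m i / k : ℕ) : ℤ) := by
      rw [Nat.cast_sub (hcfact i).1, Nat.cast_mul]
      linear_combination h2
        + ((k : ℤ) * ((⌈(m i : ℚ) / (k : ℚ)⌉₊ : ℕ) : ℤ) - ((m i : ℕ) : ℤ)) * hc'
    exact_mod_cast hgoal
end

section
/- Let n, k ∈ ℕ with 1 ≤ k < n−1 and m : [n] → ℕ with k ∣ m_i for every i ∈ [n]. If the family γ is feasible and attains the minimum total, Σ_{i=1}^{n} Σ_{j≠i} γ_{i,j} = Σ_{i=1}^{n} ( m_i + (n−k−1)·(m_i/k) ), then γ_{i,j} = m_i/k for all i ≠ j ∈ [n]; i.e., under k ∣ m_i and k < n−1 the minimum update bandwidth is achieved only by the uniform assignment γ_{i,j} = m_i/k. -/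
/-!
Fix a sender `i`. Feasibility for `E = Sᶜ` says exactly that every `k`-set `S` of receivers
gets at least `m i = k * (m i / k)` symbols. If every set `T.erase j` gets at least
`(#T - 1) * c`, averaging over `j` gives `#T * c` for `T`; so by induction on the size every
set of at least `k` receivers `S` gets `#S * (m i / k)`, in particular the whole row gets
`(n - 1) * (m i / k)`, which is the `i`-th summand of the claimed minimum. So at the minimum
every row is tight. Comparing a tight row with the same row minus one receiver `j` (still at
least `k` receivers since `k < n - 1`) gives `γ i j ≤ m i / k`, and tightness forces equality.
-/

namespace Finset

variable {α : Type*} [DecidableEq α]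

lemma card_mul_le_sum_of_forall_erase {T : Finset α} {f : α → ℕ} {c : ℕ} (hT : 2 ≤ #T)
    (h : ∀ j ∈ T, (#T - 1) * c ≤ ∑ i ∈ T.erase j, f i) :
    #T * c ≤ ∑ i ∈ T, f i := by
  have hdouble : ∑ j ∈ T, ∑ i ∈ T.erase j, f i + ∑ i ∈ T, f i = #T * ∑ i ∈ T, f i := by
    rw [← sum_add_distrib, ← smul_eq_mul, ← sum_const]
    exact sum_congr rfl fun j hj => sum_erase_add T f hj
  have hle : #T * ((#T - 1) * c) ≤ ∑ j ∈ T, ∑ i ∈ T.erase j, f i := by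
    simpa only [sum_const, smul_eq_mul] using sum_le_sum h
  obtain ⟨N, hN⟩ : ∃ N, #T = N + 1 := ⟨#T - 1, by omega⟩
  rw [hN, Nat.add_sub_cancel] at hle
  rw [hN, add_one_mul] at hdouble
  rw [hN]
  refine Nat.le_of_mul_le_mul_left ?_ (show 0 < N by omega)
  calc N * ((N + 1) * c) = (N + 1) * (N * c) := by ring
    _ ≤ N * ∑ i ∈ T, f i := by linarith

lemma card_mul_le_sum_of_forall_card_eq {u : Finset α} {f : α → ℕ} {c k : ℕ} (hk : 0 < k)
    (hku : k ≤ #u) (h : ∀ S ⊆ u, #S = k → k * c ≤ ∑ i ∈ S, f i) :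
    #u * c ≤ ∑ i ∈ u, f i := by
  suffices ∀ s, k ≤ s → ∀ S ⊆ u, #S = s → s * c ≤ ∑ i ∈ S, f i from this _ hku u subset_rfl rfl
  intro s hs
  induction s, hs using Nat.le_induction with
  | base => exact h
  | succ s hks ih =>
    intro S hSu hS
    rw [← hS]
    refine card_mul_le_sum_of_forall_erase (by omega) fun j hj => ?_
    rw [hS, Nat.add_sub_cancel]
    exact ih _ ((erase_subset j S).trans hSu) (by rw [card_erase_of_mem hj, hS, Nat.add_sub_cancel])

lemma eq_of_sum_eq_card_mul_of_forall_card_eq {u : Finset α} {f : α → ℕ} {c k : ℕ}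
    (hk : 0 < k) (hku : k < #u) (h : ∀ S ⊆ u, #S = k → k * c ≤ ∑ i ∈ S, f i)
    (hsum : ∑ i ∈ u, f i = #u * c) :
    ∀ j ∈ u, f j = c := by
  have hle : ∀ j ∈ u, f j ≤ c := by
    intro j hj
    have hrest : #(u.erase j) * c ≤ ∑ i ∈ u.erase j, f i :=
      card_mul_le_sum_of_forall_card_eq hk (by rw [card_erase_of_mem hj]; omega)
        fun S hS => h S (hS.trans (erase_subset j u))
    have hsplit := sum_erase_add u f hj
    rw [card_erase_of_mem hj] at hrest
    have hcard : #u = (#u - 1) + 1 := by omega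
    rw [hcard, add_one_mul] at hsum
    omega
  have hsum' : ∑ i ∈ u, f i = ∑ _i ∈ u, c := by rw [sum_const, smul_eq_mul, hsum]
  exact (sum_eq_sum_iff_of_le hle).1 hsum'

end Finset

open Finset

/-- When `1 ≤ k < n-1` and `k ∣ m i` for all `i`, the minimum update bandwidth is
achieved only by the uniform assignment `γ i j = m i / k`. -/
theorem stmt4 (n k : ℕ) (hk1 : 1 ≤ k) (hk2 : k < n - 1) (m : Fin n → ℕ)
    (hdvd : ∀ i, k ∣ m i)
    (γ : Fin n → Fin n → ℕ)
    (hfeas : ∀ E : Finset (Fin n), E.card = n - k →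
      ∀ i ∈ E, m i ≤ ∑ j ∈ Eᶜ, γ i j)
    (hmin : ∑ i, ∑ j ∈ Finset.univ.erase i, γ i j
      = ∑ i, (m i + (n - k - 1) * (m i / k))) :
    ∀ i j : Fin n, i ≠ j → γ i j = m i / k := by
  have hrow_card : ∀ i : Fin n, #(univ.erase i) = n - 1 := fun i => by
    rw [card_erase_of_mem (mem_univ i), card_univ, Fintype.card_fin]
  have hreceivers : ∀ i, ∀ S ⊆ univ.erase i, #S = k → k * (m i / k) ≤ ∑ j ∈ S, γ i j := by
    intro i S hS hSk
    rw [Nat.mul_div_cancel' (hdvd i), ← compl_compl S]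
    exact hfeas Sᶜ (by rw [card_compl, hSk, Fintype.card_fin]) i
      (mem_compl.2 fun hi => (mem_erase.1 (hS hi)).1 rfl)
  have hrow_le : ∀ i ∈ univ, (n - 1) * (m i / k) ≤ ∑ j ∈ univ.erase i, γ i j := fun i _ => by
    rw [← hrow_card i]
    exact card_mul_le_sum_of_forall_card_eq hk1 (by rw [hrow_card]; omega) (hreceivers i)
  have hmin_eq : ∀ i : Fin n, m i + (n - k - 1) * (m i / k) = (n - 1) * (m i / k) := by
    intro i
    obtain ⟨c, hc⟩ := hdvd i
    rw [hc, Nat.mul_div_cancel_left c hk1, ← add_mul]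
    congr 1
    omega
  have hrow_eq := (sum_eq_sum_iff_of_le hrow_le).1 (by rw [hmin]; simp only [hmin_eq])
  intro i j hij
  refine eq_of_sum_eq_card_mul_of_forall_card_eq hk1 (by rw [hrow_card]; omega)
    (hreceivers i) ?_ j (mem_erase.2 ⟨hij.symm, mem_univ j⟩)
  rw [hrow_card, ← hrow_eq i (mem_univ i)]
end

section
/- Fix a field F, n ≥ 1, functions m, p : [n] → ℕ, and construction matrices M_{i,j} ∈ F^{p_j × m_i} for i, j ∈ [n]. Let E ⊆ [n] with complement Ē = [n]∖E, and suppose the code is reconstructible from Ē. Then: (i) for every i ∈ E, Σ_{j∈Ē} rank(M_{i,j}) ≥ m_i; and (ii) Σ_{i∈E} m_i ≤ Σ_{j∈Ē} min( p_j , Σ_{i∈E} rank(M_{i,j}) ). -/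
/-!
If the nodes in `T` can reconstruct everything, then in particular data supported on a set `S`
of nodes disjoint from `T` is determined by the parities that the nodes of `T` store, so the map
`y ↦ (∑_{i ∈ S} M i j y_i)_{j ∈ T}` is injective. Counting dimensions, `∑_{i ∈ S} m i` is at most
the sum over `j ∈ T` of the ranks of its components, and the `j`-th component has rank at most
`p j` (its codomain) and at most `∑_{i ∈ S} rank (M i j)` (subadditivity of rank). Part (ii) is
the case `S = E`, part (i) the case `S = {i}`.
-/

open Module LinearMap

section LinearAlgebra

variable {K V W : Type*} [Field K] [AddCommGroup V] [Module K V]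
  [AddCommGroup W] [Module K W] [FiniteDimensional K W]

theorem LinearMap.finrank_range_finsetSum_le {η : Type*} (s : Finset η) (f : η → V →ₗ[K] W) :
    finrank K (range (∑ d ∈ s, f d)) ≤ ∑ d ∈ s, finrank K (range (f d)) := by
  have h := rank_finsetSum_le s f
  simp only [LinearMap.rank, ← finrank_eq_rank] at h
  exact_mod_cast h

theorem LinearMap.finrank_range_sum_comp_proj_le {ι : Type*} [Fintype ι] {U : ι → Type*}
    [∀ i, AddCommGroup (U i)] [∀ i, Module K (U i)] (g : ∀ i, U i →ₗ[K] W) :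
    finrank K (range (∑ i, g i ∘ₗ proj i)) ≤ ∑ i, finrank K (range (g i)) :=
  (finrank_range_finsetSum_le _ _).trans <| Finset.sum_le_sum fun _ _ =>
    Submodule.finrank_mono (range_comp_le_range _ _)

theorem LinearMap.finrank_le_sum_finrank_range_of_injective_pi {ι : Type*} [Fintype ι]
    {U : ι → Type*} [∀ i, AddCommGroup (U i)] [∀ i, Module K (U i)]
    [∀ i, FiniteDimensional K (U i)] (f : ∀ i, V →ₗ[K] U i) (hf : Function.Injective (pi f)) :
    finrank K V ≤ ∑ i, finrank K (range (f i)) := by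
  have hinj : Function.Injective (pi fun i => (f i).rangeRestrict) := fun x y hxy =>
    hf <| funext fun i => congrArg Subtype.val (congrFun hxy i)
  exact (finrank_le_finrank_of_injective hinj).trans_eq (finrank_pi_fintype K)

end LinearAlgebra

section ArrayCode

variable {F : Type*} [Field F] {ι : Type*} [Fintype ι] {m p : ι → ℕ}

def IsReconstructibleFrom (M : ∀ i j : ι, Matrix (Fin (p j)) (Fin (m i)) F) (T : Finset ι) : Prop :=
  Function.Injective fun x : (i : ι) → Fin (m i) → F =>
    ((fun j : T => x j.1), (fun j : T => ∑ i, (M i j.1).mulVec (x i)))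

theorem IsReconstructibleFrom.injective_pi_parity
    {M : ∀ i j : ι, Matrix (Fin (p j)) (Fin (m i)) F}
    {S T : Finset ι} (hrec : IsReconstructibleFrom M T) (hST : Disjoint S T) :
    Function.Injective (pi fun j : T => ∑ i : S, (M i j).mulVecLin ∘ₗ proj i) := by
  classical
  refine (injective_iff_map_eq_zero _).2 fun y hy => ?_
  -- extend `y` by zero; it vanishes on `T` because `S` and `T` are disjoint
  set x : (i : ι) → Fin (m i) → F := fun i => if h : i ∈ S then y ⟨i, h⟩ else 0
  have hparity (j : T) : ∑ i, (M i j).mulVec (x i) = 0 :=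
    calc ∑ i, (M i j).mulVec (x i)
        = ∑ i ∈ S, (M i j).mulVec (x i) :=
          (Finset.sum_subset S.subset_univ fun i _ hi => by simp [x, hi]).symm
      _ = ∑ i : S, (M i j).mulVec (y i) := by
          rw [← Finset.sum_coe_sort S]
          exact Finset.sum_congr rfl fun i _ => by simp [x]
      _ = 0 := by simpa using congrFun hy j
  have hx : x = 0 := hrec <| Prod.ext
    (funext fun j => dif_neg (Finset.disjoint_right.1 hST j.2))
    (funext fun j => by simp [hparity j])
  exact funext fun i => by simpa [x, i.2] using congrFun hx i

theorem IsReconstructibleFrom.sum_le_sum_min_rank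
    {M : ∀ i j : ι, Matrix (Fin (p j)) (Fin (m i)) F}
    {S T : Finset ι} (hrec : IsReconstructibleFrom M T) (hST : Disjoint S T) :
    ∑ i ∈ S, m i ≤ ∑ j ∈ T, min (p j) (∑ i ∈ S, (M i j).rank) := by
  have hdim : finrank F ((i : S) → Fin (m i) → F) = ∑ i ∈ S, m i := by
    rw [finrank_pi_fintype]
    simp only [finrank_fin_fun]
    exact Finset.sum_coe_sort S m
  rw [← hdim, ← Finset.sum_coe_sort T]
  refine (finrank_le_sum_finrank_range_of_injective_pi _ (hrec.injective_pi_parity hST)).trans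
    (Finset.sum_le_sum fun j _ => le_min ?_ ?_)
  · exact (Submodule.finrank_le _).trans_eq (finrank_fin_fun F)
  · exact (finrank_range_sum_comp_proj_le _).trans_eq
      (Finset.sum_coe_sort S fun i => (M i j).rank)

end ArrayCode

theorem stmt5_general {F : Type*} [Field F] (n : ℕ) (m p : Fin n → ℕ)
    (M : ∀ i j : Fin n, Matrix (Fin (p j)) (Fin (m i)) F)
    (E : Finset (Fin n))
    (hrec : Function.Injective fun x : (i : Fin n) → Fin (m i) → F =>
      ((fun j : {j : Fin n // j ∈ Eᶜ} => x j.1),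
       (fun j : {j : Fin n // j ∈ Eᶜ} => ∑ i, (M i j.1).mulVec (x i)))) :
    (∀ i ∈ E, m i ≤ ∑ j ∈ Eᶜ, (M i j).rank) ∧
    (∑ i ∈ E, m i ≤ ∑ j ∈ Eᶜ, min (p j) (∑ i ∈ E, (M i j).rank)) := by
  have hE : IsReconstructibleFrom M Eᶜ := hrec
  refine ⟨fun i hi => ?_, hE.sum_le_sum_min_rank disjoint_compl_right⟩
  have h := hE.sum_le_sum_min_rank (S := {i})
    (Finset.disjoint_singleton_left.2 (Finset.notMem_compl.2 hi))
  simp only [Finset.sum_singleton] at h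
  exact h.trans (Finset.sum_le_sum fun j _ => min_le_right _ _)

/-- Necessary conditions (x26) and (x27) for an irregular array code: if the code
with construction matrices `M i j` is reconstructible from the complement of `E`,
then (i) `∑_{j ∉ E} rank (M i j) ≥ m i` for every `i ∈ E`, and
(ii) `∑_{i ∈ E} m i ≤ ∑_{j ∉ E} min (p j) (∑_{i ∈ E} rank (M i j))`. -/
theorem stmt5 {F : Type*} [Field F] (n : ℕ) (hn : 1 ≤ n) (m p : Fin n → ℕ)
    (M : ∀ i j : Fin n, Matrix (Fin (p j)) (Fin (m i)) F)
    (E : Finset (Fin n))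
    (hrec : Function.Injective fun x : (i : Fin n) → Fin (m i) → F =>
      ((fun j : {j : Fin n // j ∈ Eᶜ} => x j.1),
       (fun j : {j : Fin n // j ∈ Eᶜ} => ∑ i, (M i j.1).mulVec (x i)))) :
    (∀ i ∈ E, m i ≤ ∑ j ∈ Eᶜ, (M i j).rank) ∧
    (∑ i ∈ E, m i ≤ ∑ j ∈ Eᶜ, min (p j) (∑ i ∈ E, (M i j).rank)) :=
  stmt5_general n m p M E hrec
end

section
/- Let n, k ∈ ℕ with 1 ≤ k < n−1 and let m : [n] → ℕ be nonincreasing (m_1 ≥ m_2 ≥ … ≥ m_n) with k ∣ m_i for every i. Call p : [n] → ℕ feasible if for every E ⊆ [n] with |E| = n−k one has Σ_{i∈E} m_i ≤ Σ_{j∉E} min( p_j , Σ_{i∈E} m_i/k ). Then the least value of Σ_{j=1}^n p_j over feasible p equals R_sma = ( (n−1)·Σ_{i=1}^{n−k} m_i + (n−k)·m_{n−k+1} ) / k, and this least value is attained by exactly one feasible p, namely p_j = ( Σ_{i=1}^{n−k+1} m_i − m_j ) / k for 1 ≤ j ≤ n−k and p_j = ( Σ_{i=1}^{n−k} m_i )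 / k for n−k < j ≤ n. -/
/-!
Since `k ∣ m i`, the right-hand side of the constraint for `E` is a sum of `k = #Eᶜ` terms, each
at most `q_E = ∑ i ∈ E, m i / k`, while the left-hand side is `k * q_E`. So `p` is feasible iff
`q_E ≤ p j` whenever `j ∉ E`, i.e. iff `p` dominates pointwise `j ↦ max {q_E | #E = n - k, j ∉ E}`,
which is therefore the unique feasible `p` of least total. As `m` is nonincreasing, an exchange
argument shows that this maximum is attained at the first `n - k` indices other than `j`; this
gives `pstar` and, summing, `Rsma`.
-/

open Finset

namespace Finset

variable {ι M : Type*} [AddCommMonoid M] [LinearOrder M]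

theorem sum_le_sum_of_card_eq_of_forall_le [IsOrderedAddMonoid M] {S T : Finset ι} {f : ι → M}
    (hcard : #S = #T) (h : ∀ x ∈ S, ∀ y ∈ T, f x ≤ f y) :
    ∑ x ∈ S, f x ≤ ∑ y ∈ T, f y := by
  obtain rfl | hS := S.eq_empty_or_nonempty
  · rw [card_empty, eq_comm, card_eq_zero] at hcard
    simp [hcard]
  obtain ⟨x₀, hx₀, hmax⟩ := exists_max_image S f hS
  calc ∑ x ∈ S, f x ≤ #S • f x₀ := sum_le_card_nsmul _ _ _ hmax
    _ = #T • f x₀ := by rw [hcard]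
    _ ≤ ∑ y ∈ T, f y := card_nsmul_le_sum _ _ _ fun y hy => h x₀ hx₀ y hy

theorem card_nsmul_le_sum_min_iff [IsOrderedCancelAddMonoid M] {T : Finset ι} {p : ι → M}
    {q : M} : #T • q ≤ ∑ j ∈ T, min (p j) q ↔ ∀ j ∈ T, q ≤ p j := by
  have hle : ∀ j ∈ T, min (p j) q ≤ q := fun _ _ => min_le_right _ _
  rw [← sum_const, (sum_le_sum hle).ge_iff_eq, sum_eq_sum_iff_of_le hle]
  simp only [min_eq_right_iff]

end Finset

theorem Antitone.sum_le_sum_of_isLowerSet {ι M : Type*} [LinearOrder ι] [AddCommMonoid M]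
    [LinearOrder M] [IsOrderedAddMonoid M] {w : ι → M} (hw : Antitone w)
    {E F : Finset ι} (hF : IsLowerSet (F : Set ι)) (hcard : #E = #F) :
    ∑ i ∈ E, w i ≤ ∑ i ∈ F, w i := by
  rw [← sum_inter_add_sum_sdiff E F, ← sum_inter_add_sum_sdiff F E, inter_comm]
  refine add_le_add le_rfl (sum_le_sum_of_card_eq_of_forall_le (card_sdiff_comm hcard) ?_)
  intro x hx y hy
  rw [mem_sdiff] at hx hy
  exact hw (le_of_not_gt fun hxy => hx.2 (hF hxy.le (mem_coe.2 hy.1)))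

theorem isLeast_sum_of_forall_iff_le {ι M : Type*} [Fintype ι] [AddCommMonoid M] [PartialOrder M]
    [IsOrderedCancelAddMonoid M] {P : ι → M} {F : (ι → M) → Prop} (hF : ∀ p, F p ↔ P ≤ p) :
    IsLeast {R | ∃ p, F p ∧ R = ∑ j, p j} (∑ j, P j) ∧
      ∀ p, F p → ∑ j, p j = ∑ j, P j → p = P := by
  refine ⟨⟨⟨P, (hF P).2 le_rfl, rfl⟩, ?_⟩, fun p hp hsum => ?_⟩
  · rintro R ⟨p, hp, rfl⟩
    exact sum_le_sum fun j _ => (hF p).1 hp j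
  · funext j
    exact ((sum_eq_sum_iff_of_le fun j _ => (hF p).1 hp j).1 hsum.symm j (mem_univ j)).symm

def initSeg (n c : ℕ) : Finset (Fin n) := univ.filter fun i : Fin n => (i : ℕ) < c

theorem card_initSeg {n c : ℕ} (h : c ≤ n) : #(initSeg n c) = c := by
  rw [initSeg, Fin.card_filter_val_lt, min_eq_right h]

theorem isLowerSet_initSeg (n c : ℕ) : IsLowerSet (initSeg n c : Set (Fin n)) := by
  intro i j hji hi
  simp only [initSeg, coe_filter, mem_univ, true_and, Set.mem_ofPred_eq] at hi ⊢
  exact lt_of_le_of_lt hji hi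

theorem sum_initSeg_succ {M : Type*} [AddCommMonoid M] {n c : ℕ} (h : c < n) (w : Fin n → M) :
    ∑ i ∈ initSeg n (c + 1), w i = w ⟨c, h⟩ + ∑ i ∈ initSeg n c, w i := by
  have hins : initSeg n (c + 1) = insert ⟨c, h⟩ (initSeg n c) := by
    ext i
    simp only [initSeg, mem_insert, mem_filter, mem_univ, true_and, Fin.ext_iff]
    omega
  rw [hins, sum_insert (by simp [initSeg])]

theorem Antitone.sum_le_sum_initSeg {M : Type*} [AddCommMonoid M] [LinearOrder M]
    [IsOrderedAddMonoid M] {n : ℕ} {w : Fin n → M} (hw : Antitone w) (E : Finset (Fin n)) :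
    ∑ i ∈ E, w i ≤ ∑ i ∈ initSeg n #E, w i :=
  hw.sum_le_sum_of_isLowerSet (isLowerSet_initSeg n #E)
    (card_initSeg (card_le_univ E |>.trans_eq (Fintype.card_fin n))).symm

section maxSumAvoiding

variable {ι : Type*} [Fintype ι] [DecidableEq ι] (w : ι → ℕ) (s : ℕ)

def maxSumAvoiding (j : ι) : ℕ :=
  ((univ.powersetCard s).filter (j ∉ ·)).sup fun E => ∑ i ∈ E, w i

variable {w s}

theorem maxSumAvoiding_apply_le_iff {j : ι} {b : ℕ} :
    maxSumAvoiding w s j ≤ b ↔ ∀ E : Finset ι, #E = s → j ∉ E → ∑ i ∈ E, w i ≤ b := by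
  simp only [maxSumAvoiding, Finset.sup_le_iff, mem_filter, mem_powersetCard, subset_univ,
    true_and, and_imp]

theorem le_maxSumAvoiding {E : Finset ι} {j : ι} (hE : #E = s) (hj : j ∉ E) :
    ∑ i ∈ E, w i ≤ maxSumAvoiding w s j :=
  maxSumAvoiding_apply_le_iff.1 le_rfl E hE hj

theorem maxSumAvoiding_le_iff {p : ι → ℕ} :
    maxSumAvoiding w s ≤ p ↔ ∀ E : Finset ι, #E = s → ∀ j ∉ E, ∑ i ∈ E, w i ≤ p j := by
  simp only [Pi.le_def, maxSumAvoiding_apply_le_iff]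
  exact ⟨fun h E hE j hj => h j E hE hj, fun h j E hE hj => h E hE j hj⟩

end maxSumAvoiding

section

variable {n s : ℕ} {w : Fin n → ℕ}

theorem maxSumAvoiding_eq (hw : Antitone w) (hs : s < n) (j : Fin n) :
    maxSumAvoiding w s j =
      if (j : ℕ) < s then ∑ i ∈ initSeg n (s + 1), w i - w j else ∑ i ∈ initSeg n s, w i := by
  refine le_antisymm (maxSumAvoiding_apply_le_iff.2 fun E hE hj => ?_) ?_
  · split_ifs with hjs
    · have hinsert := hw.sum_le_sum_initSeg (insert j E)
      rw [sum_insert hj, card_insert_of_notMem hj, hE] at hinsert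
      omega
    · simpa [hE] using hw.sum_le_sum_initSeg E
  · split_ifs with hjs
    · have hj : j ∈ initSeg n (s + 1) := by
        simp only [initSeg, mem_filter, mem_univ, true_and]
        omega
      have hcard : #((initSeg n (s + 1)).erase j) = s := by
        rw [card_erase_of_mem hj, card_initSeg hs]; rfl
      have hwitness := le_maxSumAvoiding (w := w) hcard (notMem_erase j _)
      have hsplit := add_sum_erase _ w hj
      omega
    · exact le_maxSumAvoiding (card_initSeg hs.le) (by simpa [initSeg] using hjs)

theorem sum_maxSumAvoiding (hw : Antitone w) (hs : s < n) :
    ∑ j, maxSumAvoiding w s j = (n - 1) * ∑ i ∈ initSeg n s, w i + s * w ⟨s, hs⟩ := by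
  set M := ∑ i ∈ initSeg n s, w i
  have hhead : ∑ j ∈ initSeg n s, (w ⟨s, hs⟩ + M - w j) + M = s * (w ⟨s, hs⟩ + M) := by
    rw [← sum_add_distrib, sum_congr rfl fun j hj => tsub_add_cancel_of_le
      ((single_le_sum (fun i _ => Nat.zero_le (w i)) hj).trans (Nat.le_add_left M _)),
      sum_const, card_initSeg hs.le, smul_eq_mul]
  have htail : #(univ.filter fun j : Fin n => ¬(j : ℕ) < s) = n - s := by
    rw [filter_not, card_sdiff_of_subset (filter_subset _ _), card_univ, Fintype.card_fin]
    exact congrArg (n - ·) (card_initSeg hs.le)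
  simp only [maxSumAvoiding_eq hw hs, sum_initSeg_succ hs, sum_ite, sum_const, htail, smul_eq_mul]
  change ∑ j ∈ initSeg n s, (w ⟨s, hs⟩ + M - w j) + (n - s) * M = _
  obtain ⟨d, rfl⟩ : ∃ d, n = s + d + 1 := ⟨n - s - 1, by omega⟩
  rw [show s + d + 1 - s = d + 1 by omega, show s + d + 1 - 1 = s + d by omega]
  linarith

end

theorem sum_le_sum_compl_min_iff {ι : Type*} [Fintype ι] [DecidableEq ι] {k : ℕ} (hk : 0 < k)
    (w p : ι → ℕ) {E : Finset ι} (hE : #Eᶜ = k) :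
    ∑ i ∈ E, k * w i ≤ ∑ j ∈ Eᶜ, min (p j) (∑ i ∈ E, k * w i / k) ↔
      ∀ j ∉ E, ∑ i ∈ E, w i ≤ p j := by
  simp only [Nat.mul_div_cancel_left _ hk, ← mul_sum]
  rw [← hE, ← smul_eq_mul, card_nsmul_le_sum_min_iff]
  simp only [mem_compl]

/-- The smallest code redundancy of MUB codes when `1 ≤ k < n-1` and `k ∣ m i`:
the least value of `∑ j, p j` over feasible `p` equals
`R_sma = ((n-1)·∑_{i=1}^{n-k} m i + (n-k)·m_{n-k+1}) / k`, attained by exactly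
one feasible `p`. -/
theorem stmt6 (n k : ℕ) (hk1 : 1 ≤ k) (hk2 : k < n - 1)
    (m : Fin n → ℕ) (hmono : ∀ i j : Fin n, i ≤ j → m j ≤ m i)
    (hdvd : ∀ i, k ∣ m i) :
    let feasible : (Fin n → ℕ) → Prop := fun p =>
      ∀ E : Finset (Fin n), E.card = n - k →
        ∑ i ∈ E, m i ≤ ∑ j ∈ Eᶜ, min (p j) (∑ i ∈ E, m i / k)
    let Rsma : ℕ :=
      ((n - 1) * ∑ i ∈ Finset.univ.filter (fun i : Fin n => (i : ℕ) < n - k), m i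
        + (n - k) * m ⟨n - k, by omega⟩) / k
    let pstar : Fin n → ℕ := fun j =>
      if (j : ℕ) < n - k then
        ((∑ i ∈ Finset.univ.filter (fun i : Fin n => (i : ℕ) < n - k + 1), m i) - m j) / k
      else
        (∑ i ∈ Finset.univ.filter (fun i : Fin n => (i : ℕ) < n - k), m i) / k
    IsLeast {R : ℕ | ∃ p : Fin n → ℕ, feasible p ∧ R = ∑ j, p j} Rsma ∧
      ∀ p : Fin n → ℕ, feasible p → ∑ j, p j = Rsma → p = pstar := by
  intro feasible Rsma pstar
  choose w hw using hdvd
  obtain rfl : m = fun i => k * w i := funext hw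
  have hk : 0 < k := hk1
  have hs : n - k < n := by omega
  have hanti : Antitone w := fun i j hij => Nat.le_of_mul_le_mul_left (hmono i j hij) hk
  have hfeas : ∀ p, feasible p ↔ maxSumAvoiding w (n - k) ≤ p := fun p => by
    rw [maxSumAvoiding_le_iff]
    refine forall_congr' fun E => imp_congr_right fun hE => sum_le_sum_compl_min_iff hk w p ?_
    rw [card_compl, hE, Fintype.card_fin]
    omega
  have hR : Rsma = ∑ j, maxSumAvoiding w (n - k) j := by
    rw [sum_maxSumAvoiding hanti hs]
    simp only [Rsma, ← mul_sum]
    rw [mul_left_comm, mul_left_comm (n - k), ← mul_add, Nat.mul_div_cancel_left _ hk]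
    rfl
  have hP : pstar = maxSumAvoiding w (n - k) := by
    funext j
    rw [maxSumAvoiding_eq hanti hs]
    simp only [pstar, ← mul_sum, ← Nat.mul_sub, Nat.mul_div_cancel_left _ hk]
    rfl
  rw [hR, hP]
  exact isLeast_sum_of_forall_iff_le hfeas
end

section
/- Let n ≥ 2, k = n−1, and m, p : [n] → ℕ. The following are equivalent: (a) there exists a family of nonnegative integers (γ_{i,j})_{i≠j∈[n]} with Σ_{j≠i} γ_{i,j} = m_i for every i ∈ [n] and m_i ≤ Σ_{j≠i} min( p_j , γ_{i,j} ) for every i ∈ [n]; (b) m_i ≤ Σ_{j≠i} p_j for every i ∈ [n]. Consequently, when k = n−1 the smallest code redundancy Σ_j p_j subject to the minimum-update-bandwidth constraint (a) equals the minimum code redundancy subject only to (b). -/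
/-!
The constraints decouple over the rows `i`. In row `i`, `∑ min (p j) (γ i j) ≤ ∑ γ i j = m i`,
so the second constraint forces `γ i j ≤ p j` for all `j`: the row must split `m i` into
pieces capped by the `p j`, which is possible exactly when `m i ≤ ∑ p j`.
-/

namespace Finset

variable {α : Type*} [DecidableEq α]

theorem exists_le_sum_eq_of_le_sum (s : Finset α) (p : α → ℕ) {t : ℕ}
    (ht : t ≤ ∑ j ∈ s, p j) : ∃ γ : α → ℕ, (∀ j ∈ s, γ j ≤ p j) ∧ ∑ j ∈ s, γ j = t := by
  induction s using Finset.induction_on generalizing t with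
  | empty => exact ⟨0, by simp, by simpa [eq_comm] using ht⟩
  | insert a s ha ih =>
    rw [sum_insert ha] at ht
    obtain ⟨γ, hγp, hγt⟩ := ih (t := t - min t (p a)) (by omega)
    refine ⟨Function.update γ a (min t (p a)), ?_, ?_⟩
    · intro j hj
      rcases eq_or_ne j a with rfl | hja
      · simp
      · simpa [hja] using hγp j (mem_of_mem_insert_of_ne hj hja)
    · rw [sum_insert ha, sum_update_of_notMem ha, hγt, Function.update_self]
      omega

theorem exists_sum_eq_le_sum_min_iff (s : Finset α) (p : α → ℕ) (m : ℕ) :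
    (∃ γ : α → ℕ, ∑ j ∈ s, γ j = m ∧ m ≤ ∑ j ∈ s, min (p j) (γ j)) ↔
      m ≤ ∑ j ∈ s, p j := by
  constructor
  · rintro ⟨γ, -, hm⟩
    exact hm.trans (sum_le_sum fun j _ => min_le_left _ _)
  · intro hm
    obtain ⟨γ, hγp, hγm⟩ := exists_le_sum_eq_of_le_sum s p hm
    refine ⟨γ, hγm, ?_⟩
    rw [sum_congr rfl fun j hj => min_eq_right (hγp j hj), hγm]

end Finset

theorem stmt7_general (n : ℕ) (m p : Fin n → ℕ) :
    (∃ γ : Fin n → Fin n → ℕ,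
        (∀ i : Fin n, ∑ j ∈ Finset.univ.erase i, γ i j = m i) ∧
        (∀ i : Fin n, m i ≤ ∑ j ∈ Finset.univ.erase i, min (p j) (γ i j)))
    ↔ (∀ i : Fin n, m i ≤ ∑ j ∈ Finset.univ.erase i, p j) := by
  rw [← forall_congr' fun i => Finset.exists_sum_eq_le_sum_min_iff _ p (m i), Classical.skolem]
  simp only [forall_and]

/-- When `k = n-1`, the minimum-update-bandwidth feasibility constraints on `p`
(existence of `γ` with `∑_{j≠i} γ i j = m i` and `m i ≤ ∑_{j≠i} min (p j) (γ i j)`)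
are equivalent to the plain redundancy constraints `m i ≤ ∑_{j≠i} p j`. -/
theorem stmt7 (n : ℕ) (hn : 2 ≤ n) (m p : Fin n → ℕ) :
    (∃ γ : Fin n → Fin n → ℕ,
        (∀ i : Fin n, ∑ j ∈ Finset.univ.erase i, γ i j = m i) ∧
        (∀ i : Fin n, m i ≤ ∑ j ∈ Finset.univ.erase i, min (p j) (γ i j)))
    ↔ (∀ i : Fin n, m i ≤ ∑ j ∈ Finset.univ.erase i, p j) :=
  stmt7_general n m p
end

section
/- Let n, k ∈ ℕ with 1 < k < n−1 and let m : [n] → ℕ be nonincreasing (m_1 ≥ … ≥ m_n) with k ∣ m_i for every i. Set B = Σ_{i=1}^n m_i, μ = max( m_{n−k} , ⌈B/k⌉ ), R_min = Σ_{i=1}^{n−k} ( max(μ − m_i, 0) + m_i ), and R_sma = ( (n−1)·Σ_{i=1}^{n−k} m_i + (n−k)·m_{n−k+1} ) / k. Then R_sma = R_min if and only if either m_1 = m_2 = … = m_n, or m_2 = m_3 = … = m_n = 0 (i.e., m_1 = B and all other m_i vanish). -/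
open Finset

lemma sum_all_eq_of_le {s : Finset ℕ} {f : ℕ → ℕ} {c : ℕ}
    (h : ∀ x ∈ s, c ≤ f x) (hs : ∑ x ∈ s, f x = s.card * c) :
    ∀ x ∈ s, f x = c := by
  by_contra hcon
  push_neg at hcon
  obtain ⟨x, hx, hne⟩ := hcon
  have h1 : ∑ _x ∈ s, c < ∑ x ∈ s, f x :=
    Finset.sum_lt_sum h ⟨x, hx, lt_of_le_of_ne (h x hx) (Ne.symm hne)⟩
  rw [Finset.sum_const, smul_eq_mul] at h1
  omega

lemma sum_all_eq_of_ge {s : Finset ℕ} {f : ℕ → ℕ} {c : ℕ}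
    (h : ∀ x ∈ s, f x ≤ c) (hs : ∑ x ∈ s, f x = s.card * c) :
    ∀ x ∈ s, f x = c := by
  by_contra hcon
  push_neg at hcon
  obtain ⟨x, hx, hne⟩ := hcon
  have h1 : ∑ x ∈ s, f x < ∑ _x ∈ s, c :=
    Finset.sum_lt_sum h ⟨x, hx, lt_of_le_of_ne (h x hx) hne⟩
  rw [Finset.sum_const, smul_eq_mul] at h1
  omega

lemma auxmain (k p : ℕ) (f : ℕ → ℕ) (hk : 1 < k) (hp : 2 ≤ p)
    (hanti : ∀ i j : ℕ, i ≤ j → j < p + k → f j ≤ f i)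
    (hdvd : ∀ i, k ∣ f i) :
    ((p + k - 1) * (∑ j ∈ Finset.range p, f j) + p * f p
      = k * ∑ j ∈ Finset.range p,
          max (max (f (p-1)) ((∑ j ∈ Finset.range (p+k), f j) / k)) (f j))
    ↔ ((∀ i, i < p + k → f i = f 0) ∨ (∀ i, 1 ≤ i → i < p + k → f i = 0)) := by
  have hk0 : 0 < k := by omega
  set S := ∑ j ∈ Finset.range p, f j with hS
  set T := ∑ j ∈ Finset.Ico p (p+k), f j with hT
  have hB : ∑ j ∈ Finset.range (p+k), f j = S + T := by
    simp only [hS, hT, Finset.range_eq_Ico]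
    exact (Finset.sum_Ico_consecutive f (Nat.zero_le p) (by omega)).symm
  rw [hB]
  set u := max (f (p-1)) ((S + T) / k) with hu
  set M := ∑ j ∈ Finset.range p, max u (f j) with hM
  have hkS : k ∣ S := Finset.dvd_sum (fun j _ => hdvd j)
  have hkT : k ∣ T := Finset.dvd_sum (fun j _ => hdvd j)
  have hfp_le : f p ≤ f (p-1) := hanti (p-1) p (by omega) (by omega)
  have hfp1u : f (p-1) ≤ u := le_max_left _ _
  have hBu : S + T ≤ k * u := by
    calc S + T = k * ((S + T) / k) := (Nat.mul_div_cancel' (Dvd.dvd.add hkS hkT)).symm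
    _ ≤ k * u := Nat.mul_le_mul_left k (le_max_right _ _)
  have hSlb : p * f (p-1) ≤ S := by
    calc p * f (p-1) = ∑ _j ∈ Finset.range p, f (p-1) := by
          rw [Finset.sum_const, Finset.card_range, smul_eq_mul]
    _ ≤ S := Finset.sum_le_sum (fun j hj => by
        exact hanti j (p-1) (by simp at hj; omega) (by omega))
  have hTub : T ≤ k * f p := by
    calc T ≤ ∑ _j ∈ Finset.Ico p (p+k), f p := Finset.sum_le_sum (fun j hj => by
        simp at hj; exact hanti p j hj.1 hj.2)
    _ = k * f p := by rw [Finset.sum_const, Nat.card_Ico, smul_eq_mul]; congr 1; omega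
  have hf0S : f 0 ≤ S := Finset.single_le_sum (f := f) (fun _ _ => Nat.zero_le _)
      (Finset.mem_range.mpr (by omega))
  constructor
  · intro hEq
    rcases max_cases (f (p-1)) ((S+T)/k) with ⟨hu1, hu2⟩ | ⟨hu1, hu2⟩
    · -- Case I : u = f (p-1)
      have hufp : u = f (p-1) := hu.trans hu1
      have hMS : M = S := by
        rw [hM, hS]
        refine Finset.sum_congr rfl (fun j hj => ?_)
        refine max_eq_right ?_
        rw [hufp]
        exact hanti j (p-1) (by simp at hj; omega) (by omega)
      rw [hMS] at hEq
      have e1 : k * S ≤ (p+k-1) * S := Nat.mul_le_mul_right S (by omega)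
      have e2 : (p+k-1) * S ≤ k * S := by rw [← hEq]; exact Nat.le_add_right _ _
      have hS0 : S = 0 := by
        by_contra hS0
        have := (Nat.mul_lt_mul_right (Nat.pos_of_ne_zero hS0)).mpr
          (show k < p + k - 1 by omega)
        omega
      left
      intro i hi
      have hf00 : f 0 = 0 := by omega
      have : f i ≤ f 0 := hanti 0 i (Nat.zero_le i) hi
      omega
    · -- Case II : u = (S+T)/k
      have hku : k * u = S + T := by
        rw [hu, hu1]; exact Nat.mul_div_cancel' (Dvd.dvd.add hkS hkT)
      rcases le_or_gt (f 1) u with ha | hb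
      · -- sub (a)
        have hMa : M = max u (f 0) + (p-1) * u := by
          rw [hM, Finset.range_eq_Ico, Finset.sum_eq_sum_Ico_succ_bot (show 0 < p by omega)]
          congr 1
          calc ∑ j ∈ Finset.Ico (0+1) p, max u (f j) = ∑ _j ∈ Finset.Ico 1 p, u :=
              Finset.sum_congr rfl (fun j hj => by
                simp only [Finset.mem_Ico] at hj
                exact max_eq_left (le_trans (hanti 1 j hj.1 (by omega)) ha))
          _ = (p-1) * u := by rw [Finset.sum_const, Nat.card_Ico, smul_eq_mul]
        rcases le_or_gt (f 0) u with ha1 | ha2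
        · -- (a1) : all equal
          rw [hMa, max_eq_left ha1] at hEq
          have h3 : k * (u + (p-1)*u) = p*S + p*T := by
            have h4 : u + (p-1)*u = p * u := by
              calc u + (p-1)*u = ((p-1)+1) * u := by ring
              _ = p * u := by rw [show (p-1)+1 = p by omega]
            rw [h4, show k * (p*u) = p * (k*u) by ring, hku, Nat.mul_add]
          rw [h3] at hEq
          have h6 : (p+k-1)*S = p*S + (k-1)*S := by
            rw [show p+k-1 = p + (k-1) by omega, add_mul]
          have h5 : (k-1)*S + p * f p = p * T := by omega
          have b1 : (k-1) * (p * f (p-1)) ≤ (k-1) * S := Nat.mul_le_mul_left _ hSlb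
          have b2 : p * T ≤ p * (k * f p) := Nat.mul_le_mul_left _ hTub
          have h7 : p * (k * f p) = (k-1)*(p * f p) + p * f p := by
            obtain ⟨k1, rfl⟩ : ∃ k1, k = k1 + 1 := ⟨k-1, by omega⟩
            simp only [Nat.add_sub_cancel]; ring
          have b3 : (k-1)*(p * f (p-1)) ≤ (k-1)*(p * f p) := by omega
          have b4 : f (p-1) = f p :=
            le_antisymm (Nat.le_of_mul_le_mul_left
              (Nat.le_of_mul_le_mul_left b3 (by omega)) (by omega)) hfp_le
          have b5 : (k-1) * S ≤ (k-1) * (p * f p) := by omega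
          have b6 : S = p * f p :=
            le_antisymm (Nat.le_of_mul_le_mul_left b5 (by omega)) (b4 ▸ hSlb)
          have b8 : p * T = p * (k * f p) := by
            rw [b6] at h5; omega
          have b9 : T = k * f p := Nat.eq_of_mul_eq_mul_left (by omega) b8
          have hall1 : ∀ x ∈ Finset.range p, f x = f p :=
            sum_all_eq_of_le
              (fun x hx => by
                rw [← b4]
                exact hanti x (p-1) (by simp at hx; omega) (by omega))
              (by rw [Finset.card_range]; exact b6)
          have hall2 : ∀ x ∈ Finset.Ico p (p+k), f x = f p :=
            sum_all_eq_of_ge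
              (fun x hx => by
                simp only [Finset.mem_Ico] at hx
                exact hanti p x hx.1 hx.2)
              (by rw [Nat.card_Ico, show p+k-p = k by omega]; exact b9)
          left
          intro i hi
          have hf0p : f 0 = f p := hall1 0 (Finset.mem_range.mpr (by omega))
          rcases lt_or_ge i p with h | h
          · rw [hall1 i (Finset.mem_range.mpr h), hf0p]
          · rw [hall2 i (Finset.mem_Ico.mpr ⟨h, hi⟩), hf0p]
        · -- (a2) : tail zero
          rw [hMa, max_eq_right (le_of_lt ha2)] at hEq
          set S' := ∑ j ∈ Finset.Ico 1 p, f j with hS'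
          have hSsplit : S = f 0 + S' := by
            rw [hS, Finset.range_eq_Ico, Finset.sum_eq_sum_Ico_succ_bot (show 0 < p by omega)]
          have r2 : k*(f 0 + (p-1)*u) = k*f 0 + (p-1)*(k*u) := by ring
          rw [r2, hku] at hEq
          have r3 : (p-1)*(S+T) = (p-1)*f 0 + (p-1)*S' + (p-1)*T := by
            rw [hSsplit]; ring
          have r4 : (p+k-1)*S = (p-1)*f 0 + k*f 0 + (p-1)*S' + k*S' := by
            rw [hSsplit, show p+k-1 = (p-1)+k by omega]; ring
          have h5 : k*S' + p * f p = (p-1)*T := by omega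
          have hS'lb : (p-1) * f (p-1) ≤ S' := by
            calc (p-1) * f (p-1) = ∑ _j ∈ Finset.Ico 1 p, f (p-1) := by
                  rw [Finset.sum_const, Nat.card_Ico, smul_eq_mul]
            _ ≤ S' := Finset.sum_le_sum (fun j hj => by
                simp only [Finset.mem_Ico] at hj
                exact hanti j (p-1) (by omega) (by omega))
          have b0 : k*((p-1)*f p) ≤ k*((p-1)*f (p-1)) :=
            Nat.mul_le_mul_left _ (Nat.mul_le_mul_left _ hfp_le)
          have b1 : k*((p-1)*f (p-1)) ≤ k*S' := Nat.mul_le_mul_left _ hS'lb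
          have b2 : (p-1)*T ≤ (p-1)*(k*f p) := Nat.mul_le_mul_left _ hTub
          have i2 : (p-1)*(k*f p) = k*((p-1)*f p) := by ring
          have hpfp : p * f p = 0 := by omega
          have hfp0 : f p = 0 := by
            rcases Nat.mul_eq_zero.mp hpfp with h | h
            · omega
            · exact h
          have hT0 : T = 0 := by rw [hfp0, Nat.mul_zero] at hTub; omega
          have hS'0 : S' = 0 := by
            rw [hfp0, hT0, Nat.mul_zero, Nat.mul_zero] at h5
            rcases Nat.mul_eq_zero.mp (by omega : k * S' = 0) with h | h
            · omega
            · exact h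
          right
          intro i h1i hin
          rcases lt_or_ge i p with h | h
          · have : f i ≤ S' := Finset.single_le_sum (f := f)
              (fun _ _ => Nat.zero_le _) (Finset.mem_Ico.mpr ⟨h1i, h⟩)
            omega
          · have : f i ≤ f p := hanti p i h hin
            omega
      · -- sub (b) : contradiction
        exfalso
        have hb0 : u < f 0 := lt_of_lt_of_le hb (hanti 0 1 (by omega) (by omega))
        set S2 := ∑ j ∈ Finset.Ico 2 p, f j with hS2
        set X := ∑ j ∈ Finset.Ico 2 p, max u (f j) with hX
        have hM2 : M = f 0 + (f 1 + X) := by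
          rw [hM, Finset.range_eq_Ico,
            Finset.sum_eq_sum_Ico_succ_bot (show 0 < p by omega) (fun j => max u (f j)),
            Finset.sum_eq_sum_Ico_succ_bot (show 0+1 < p by omega) (fun j => max u (f j))]
          rw [max_eq_right (le_of_lt hb0), max_eq_right (le_of_lt hb)]
        have hpt : X + (p-2) * f p ≤ (p-2) * u + S2 := by
          calc X + (p-2) * f p = ∑ j ∈ Finset.Ico 2 p, (max u (f j) + f p) := by
                rw [Finset.sum_add_distrib, Finset.sum_const, Nat.card_Ico, smul_eq_mul, hX]
          _ ≤ ∑ j ∈ Finset.Ico 2 p, (u + f j) := Finset.sum_le_sum (fun j hj => by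
                simp only [Finset.mem_Ico] at hj
                rcases max_cases u (f j) with ⟨h1, h2⟩ | ⟨h1, h2⟩
                · rw [h1]
                  have : f p ≤ f j := hanti j p (by omega) (by omega)
                  omega
                · rw [h1]
                  have : f p ≤ u := le_trans hfp_le hfp1u
                  omega)
          _ = (p-2)*u + S2 := by
                rw [Finset.sum_add_distrib, Finset.sum_const, Nat.card_Ico, smul_eq_mul, hS2]
        have hSsplit2 : S = f 0 + (f 1 + S2) := by
          rw [hS, Finset.range_eq_Ico,
            Finset.sum_eq_sum_Ico_succ_bot (show 0 < p by omega) f,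
            Finset.sum_eq_sum_Ico_succ_bot (show 0+1 < p by omega) f]
        have m1 : k * (X + (p-2)*f p) ≤ k * ((p-2)*u + S2) := Nat.mul_le_mul_left k hpt
        have m2 : k * ((p-2)*u + S2) = (p-2)*(k*u) + k*S2 := by ring
        rw [m2, hku] at m1
        have m3 : k * (X + (p-2)*f p) = k*X + (p-2)*(k * f p) := by ring
        rw [m3] at m1
        have m4 : k * M = k*f 0 + k*f 1 + k*X := by rw [hM2]; ring
        rw [m4] at hEq
        have m5 : (p-2)*(S+T) = (p-2)*f 0 + (p-2)*f 1 + (p-2)*S2 + (p-2)*T := by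
          rw [hSsplit2]; ring
        have m6 : (p-2)*T ≤ (p-2)*(k * f p) := Nat.mul_le_mul_left _ hTub
        have m7 : (p+k-1)*S = (p-2)*f 0 + (p-2)*f 1 + (p-2)*S2
            + k*f 0 + k*f 1 + k*S2 + f 0 + f 1 + S2 := by
          rw [hSsplit2, show p+k-1 = (p-2)+k+1 by omega]; ring
        omega
  · intro h
    rcases h with hall | htail
    · -- all equal
      obtain ⟨d, hd⟩ := hdvd 0
      have hSc : S = p * (k*d) := by
        rw [hS]
        calc ∑ j ∈ Finset.range p, f j = ∑ _j ∈ Finset.range p, k*d :=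
            Finset.sum_congr rfl (fun j hj => by
              rw [hall j (by simp at hj; omega), hd])
        _ = p * (k*d) := by rw [Finset.sum_const, Finset.card_range, smul_eq_mul]
      have hTc : T = k * (k*d) := by
        rw [hT]
        calc ∑ j ∈ Finset.Ico p (p+k), f j = ∑ _j ∈ Finset.Ico p (p+k), k*d :=
            Finset.sum_congr rfl (fun j hj => by
              simp only [Finset.mem_Ico] at hj
              rw [hall j hj.2, hd])
        _ = k * (k*d) := by
            rw [Finset.sum_const, Nat.card_Ico, smul_eq_mul, show p+k-p = k by omega]
      have hdiv : (S+T)/k = (p+k)*d := by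
        rw [hSc, hTc, show p*(k*d) + k*(k*d) = k*((p+k)*d) by ring,
          Nat.mul_div_cancel_left _ hk0]
      have huc : u = (p+k)*d := by
        rw [hu, hdiv, hall (p-1) (by omega), hd]
        exact max_eq_right (Nat.mul_le_mul_right d (by omega))
      have hMc : M = p * ((p+k)*d) := by
        rw [hM]
        calc ∑ j ∈ Finset.range p, max u (f j) = ∑ _j ∈ Finset.range p, (p+k)*d :=
            Finset.sum_congr rfl (fun j hj => by
              rw [huc, hall j (by simp at hj; omega), hd]
              exact max_eq_left (Nat.mul_le_mul_right d (by omega)))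
        _ = p * ((p+k)*d) := by rw [Finset.sum_const, Finset.card_range, smul_eq_mul]
      rw [hSc, hMc, hall p (by omega), hd]
      obtain ⟨q, rfl⟩ : ∃ q, p = q + 2 := ⟨p-2, by omega⟩
      rw [show q+2+k-1 = q+k+1 by omega]
      ring
    · -- tail zero
      obtain ⟨d, hd⟩ := hdvd 0
      have hS'0 : ∑ j ∈ Finset.Ico 1 p, f j = 0 :=
        Finset.sum_eq_zero (fun j hj => by
          simp only [Finset.mem_Ico] at hj
          exact htail j hj.1 (by omega))
      have hSc : S = k * d := by
        rw [hS, Finset.range_eq_Ico,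
          Finset.sum_eq_sum_Ico_succ_bot (show 0 < p by omega) f, hS'0, hd, Nat.add_zero]
      have hT0 : T = 0 := Finset.sum_eq_zero (fun j hj => by
        simp only [Finset.mem_Ico] at hj
        exact htail j (by omega) hj.2)
      have hdiv : (S + T)/k = d := by
        rw [hSc, hT0, Nat.add_zero, Nat.mul_div_cancel_left _ hk0]
      have hfp1 : f (p-1) = 0 := htail (p-1) (by omega) (by omega)
      have hfp0 : f p = 0 := htail p (by omega) (by omega)
      have huc : u = d := by rw [hu, hdiv, hfp1]; simp
      have hdk : d ≤ k * d := by
        calc d = 1 * d := (one_mul d).symm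
        _ ≤ k * d := Nat.mul_le_mul_right d hk0
      have hMc : M = k*d + (p-1)*d := by
        rw [hM, Finset.range_eq_Ico,
          Finset.sum_eq_sum_Ico_succ_bot (show 0 < p by omega) (fun j => max u (f j))]
        congr 1
        · rw [huc, hd]
          exact max_eq_right hdk
        · calc ∑ j ∈ Finset.Ico 1 p, max u (f j) = ∑ _j ∈ Finset.Ico 1 p, d :=
              Finset.sum_congr rfl (fun j hj => by
                simp only [Finset.mem_Ico] at hj
                rw [htail j hj.1 (by omega), huc]
                simp)
          _ = (p-1)*d := by rw [Finset.sum_const, Nat.card_Ico, smul_eq_mul]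
      rw [hSc, hMc, hfp0, Nat.mul_zero, Nat.add_zero]
      obtain ⟨q, rfl⟩ : ∃ q, p = q + 2 := ⟨p-2, by omega⟩
      rw [show q+2+k-1 = q+k+1 by omega, show q+2-1 = q+1 by omega]
      ring

/-- Characterization of parameters for which MR-MUB codes exist (`1 < k < n-1`,
`k ∣ m i`, `m` nonincreasing): `R_sma = R_min` iff the `m i` are all equal or all
data symbols are stored in the first node. -/
theorem stmt8 (n k : ℕ) (hk1 : 1 < k) (hk2 : k < n - 1)
    (m : Fin n → ℕ) (hmono : ∀ i j : Fin n, i ≤ j → m j ≤ m i)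
    (hdvd : ∀ i, k ∣ m i) :
    let B : ℕ := ∑ i, m i
    let μ : ℕ := max (m ⟨n - k - 1, by omega⟩) ⌈(B : ℚ) / (k : ℚ)⌉₊
    let Rmin : ℕ := ∑ i ∈ Finset.univ.filter (fun i : Fin n => (i : ℕ) < n - k),
      (max (μ - m i) 0 + m i)
    let Rsma : ℕ :=
      ((n - 1) * ∑ i ∈ Finset.univ.filter (fun i : Fin n => (i : ℕ) < n - k), m i
        + (n - k) * m ⟨n - k, by omega⟩) / k
    (Rsma = Rmin ↔
      ((∀ i j : Fin n, m i = m j) ∨ (∀ i : Fin n, (i : ℕ) ≠ 0 → m i = 0))) := by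
  intro B μ Rmin Rsma
  have hk0 : 0 < k := by omega
  have hn : k + 2 ≤ n := by omega
  unfold Rsma Rmin μ B
  set p := n - k with hp
  set f : ℕ → ℕ := fun j => if h : j < n then m ⟨j, h⟩ else 0 with hf
  have hfi : ∀ i : Fin n, f i = m i := fun i => by simp [hf]
  have hanti' : ∀ i j : ℕ, i ≤ j → j < p + k → f j ≤ f i := by
    intro i j hij hj
    have hjn : j < n := by omega
    have hin : i < n := by omega
    simp only [hf, dif_pos hjn, dif_pos hin]
    exact hmono ⟨i, hin⟩ ⟨j, hjn⟩ hij
  have hfdvd' : ∀ i, k ∣ f i := by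
    intro i
    simp only [hf]
    split
    · exact hdvd _
    · exact dvd_zero k
  have key := auxmain k p f hk1 (by omega) hanti' hfdvd'
  have hpk : p + k = n := by omega
  rw [hpk] at key
  -- conversion of filtered Fin sums to range sums
  have hconv : ∀ H : ℕ → ℕ,
      ∑ i ∈ Finset.univ.filter (fun i : Fin n => (i : ℕ) < p), H (m i)
        = ∑ j ∈ Finset.range p, H (f j) := by
    intro H
    have h2 : Finset.filter (fun j => j < p) (Finset.range n) = Finset.range p := by
      ext x
      simp only [Finset.mem_filter, Finset.mem_range]
      omega
    rw [Finset.sum_filter]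
    calc ∑ i : Fin n, (if (i : ℕ) < p then H (m i) else 0)
        = ∑ i : Fin n, (if (i : ℕ) < p then H (f (i : ℕ)) else 0) :=
          Finset.sum_congr rfl (fun i _ => by rw [hfi])
      _ = ∑ j ∈ Finset.range n, (if j < p then H (f j) else 0) :=
          Fin.sum_univ_eq_sum_range (fun j => if j < p then H (f j) else 0) n
      _ = ∑ j ∈ Finset.range p, H (f j) := by rw [← Finset.sum_filter, h2]
  have hBf : ∑ i, m i = ∑ j ∈ Finset.range n, f j := by
    rw [← Fin.sum_univ_eq_sum_range]
    exact Finset.sum_congr rfl (fun i _ => (hfi i).symm)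
  have hceil : ⌈((∑ i, m i : ℕ) : ℚ) / (k : ℚ)⌉₊ = (∑ j ∈ Finset.range n, f j) / k := by
    obtain ⟨c, hc⟩ : k ∣ ∑ i, m i := Finset.dvd_sum (fun i _ => hdvd i)
    rw [← hBf, hc, Nat.mul_div_cancel_left _ hk0]
    push_cast
    rw [mul_div_cancel_left₀ _ (show (k:ℚ) ≠ 0 by positivity)]
    exact Nat.ceil_natCast c
  have e1 : ∀ h : p - 1 < n, m ⟨p-1, h⟩ = f (p-1) := fun h => by
    simp only [hf]; rw [dif_pos h]
  have e2 : ∀ h : p < n, m ⟨p, h⟩ = f p := fun h => by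
    simp only [hf]; rw [dif_pos h]
  have hmx : ∀ a b : ℕ, max (a - b) 0 + b = max a b := fun a b => by omega
  rw [hceil, e1, e2]
  simp only [hmx]
  have hconvmax := hconv (fun x => max (max (f (p-1)) ((∑ j ∈ Finset.range n, f j) / k)) x)
  have hconvid := hconv id
  simp only [id] at hconvid
  rw [hconvmax, hconvid]
  rw [Nat.div_eq_iff_eq_mul_right hk0
    (Dvd.dvd.add ((Finset.dvd_sum fun j _ => hfdvd' j).mul_left (n-1))
      ((hfdvd' p).mul_left p))]
  rw [key]
  constructor
  · rintro (hall | htail)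
    · left
      intro i j
      rw [← hfi i, ← hfi j, hall i i.isLt, hall j j.isLt]
    · right
      intro i hi
      rw [← hfi i]
      exact htail i (by omega) i.isLt
  · rintro (hall | htail)
    · left
      intro i hi
      have h1 : f i = m ⟨i, hi⟩ := by simp only [hf]; rw [dif_pos hi]
      have h2 : f 0 = m ⟨0, by omega⟩ := by
        simp only [hf]; rw [dif_pos (show (0:ℕ) < n by omega)]
      rw [h1, h2]
      exact hall _ _
    · right
      intro i h1 h2
      have hx : f i = m ⟨i, h2⟩ := by simp only [hf]; rw [dif_pos h2]
      rw [hx]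
      exact htail ⟨i, h2⟩ (by simpa using by omega)
end

section
/- Let F be a field and n, k, m ∈ ℕ with 1 ≤ k ≤ n−2 and k ∣ m, and set p = (n−k)·m/k. Suppose matrices M_{i,j} ∈ F^{p×m} are given for all i ≠ j ∈ [n] with rank(M_{i,j}) = m/k for every i ≠ j, such that the code with parity vectors P_j(x) = Σ_{i≠j} M_{i,j}·x_i is reconstructible from every S ⊆ [n] with |S| = k. Then the total number of nonzero entries of all the matrices {M_{i,j}}_{i≠j∈[n]} is at least n·m·(n−k) + n·(k−1)·m/k. Consequently the update complexity θ (this total divided by n·m) satisfies θ ≥ (n−k) + (k−1)/k. -/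
/-!
For a single matrix `A`, a basis of the row space chosen among the rows meets every nonzero
column, and each remaining nonzero row contributes an entry of its own, so
`#nonzero columns + #nonzero rows ≤ #nonzero entries + rank A`.

Reconstructibility from every `k`-set bounds the first two quantities from below. A data symbol
`c` of node `i` must enter the parities of at least `n - k` other nodes, since otherwise the unit
vector at `(i, c)` is invisible to some `k` nodes. Because `k·m + k·p = n·m`, the map from the
data to what a `k`-set `S` stores is a bijection; a preimage of a unit parity vector at `(j, r)`
with `j ∈ S` vanishes on `S`, so row `r` of node `j`'s parity must depend on at least `k` nodes.
Summing over all matrices with rank `m/k`, the count of nonzero entries is at least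
`n·m·(n-k) + n·p·k - n·(n-1)·m/k`, and `(n-k)·k - (n-1) ≥ k - 1` once `n - k ≥ 2`.
-/

open Finset Module Submodule

theorem Nat.sub_one_add_sub_one_le_sub_mul {N k : ℕ} (hk1 : 1 ≤ k) (hk2 : k + 2 ≤ N) :
    (k - 1) + (N - 1) ≤ (N - k) * k := by
  have h : 2 * (k - 1) ≤ (N - k) * (k - 1) := Nat.mul_le_mul_right _ (by omega)
  have h2 : (N - k) * k = (N - k) * (k - 1) + (N - k) := by
    rw [← Nat.mul_add_one, Nat.sub_add_cancel hk1]
  omega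

namespace Matrix

variable {m n K : Type*} [Fintype m] [Fintype n] [Field K] (A : Matrix m n K)

theorem exists_finset_card_le_rank_row_mem_span :
    ∃ s : Finset m, #s ≤ A.rank ∧ ∀ r, A.row r ∈ span K (A.row '' s) := by
  classical
  obtain ⟨b, -, -, hspan, hli⟩ :=
    exists_linearIndepOn_extension (linearIndepOn_empty K A.row) (Set.empty_subset Set.univ)
  refine ⟨b.toFinset, ?_, fun r => by simpa using hspan ⟨r, Set.mem_univ r, rfl⟩⟩
  have hcard : finrank K (span K (A.row '' b)) = Fintype.card b := by
    rw [Set.image_eq_range]; exact finrank_span_eq_card hli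
  rw [Set.toFinset_card, ← hcard, rank_eq_finrank_span_row]
  exact finrank_mono (span_mono (Set.image_subset_range _ _))

variable [DecidableEq K]

def support : Finset (m × n) := {rc | A rc.1 rc.2 ≠ 0}

def nonzeroRows : Finset m := {r | A.row r ≠ 0}

def nonzeroCols : Finset n := {c | A.col c ≠ 0}

theorem card_nonzeroCols_add_card_nonzeroRows_le :
    #A.nonzeroCols + #A.nonzeroRows ≤ #A.support + A.rank := by
  classical
  obtain ⟨s, hs, hspan⟩ := A.exists_finset_card_le_rank_row_mem_span
  have hcols :
      Set.SurjOn Prod.snd (A.support.filter (·.1 ∈ s) : Set (m × n)) A.nonzeroCols := by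
    intro c hc
    obtain ⟨r, hr⟩ : ∃ r, A r c ≠ 0 := by simpa [nonzeroCols, funext_iff] using hc
    obtain ⟨r', hr's, hr'⟩ : ∃ r' ∈ s, A r' c ≠ 0 := by
      by_contra! hzero
      have hker : span K (A.row '' s) ≤ LinearMap.ker (LinearMap.proj c) :=
        span_le.2 <| by rintro _ ⟨r', hr', rfl⟩; exact hzero r' hr'
      exact hr (hker (hspan r))
    exact ⟨(r', c), by simp [support, hr's, hr'], rfl⟩
  have hrows :
      Set.SurjOn Prod.fst (A.support.filter (·.1 ∉ s) : Set (m × n)) ↑(A.nonzeroRows \ s) := by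
    intro r hr
    obtain ⟨⟨c, hc⟩, hrs⟩ : (∃ c, A r c ≠ 0) ∧ r ∉ s := by
      simpa [nonzeroRows, funext_iff] using hr
    exact ⟨(r, c), by simp [support, hc, hrs], rfl⟩
  have hcols_le := card_le_card_of_surjOn _ hcols
  have hrows_le := card_le_card_of_surjOn _ hrows
  have hsplit := card_filter_add_card_filter_not (s := A.support) (fun rc => rc.1 ∈ s)
  have hsdiff := card_le_card_sdiff_add_card (s := A.nonzeroRows) (t := s)
  omega

end Matrix

section ArrayCode

variable {F ι α β : Type*} [Field F] [Fintype ι] [DecidableEq ι] [Fintype α] [Fintype β]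
  (M : ι → ι → Matrix β α F)

def reconstructionMap (S : Finset ι) :
    (ι → α → F) →ₗ[F] ({j : ι // j ∈ S} → α → F) × ({j : ι // j ∈ S} → β → F) where
  toFun x := (fun j => x j.1, fun j => ∑ i ∈ univ.erase j.1, (M i j.1).mulVec (x i))
  map_add' x y := by ext <;> simp [Matrix.mulVec_add, sum_add_distrib]
  map_smul' a x := by
    refine Prod.ext rfl (funext fun j => ?_)
    simp only [Pi.smul_apply, Matrix.mulVec_smul, smul_sum, RingHom.id_apply, Prod.smul_mk]

variable {M} {S : Finset ι}

theorem exists_col_ne_zero_of_injective_reconstructionMap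
    (hS : Function.Injective (reconstructionMap M S)) {i : ι} (hi : i ∉ S) (c : α) :
    ∃ j ∈ S, (M i j).col c ≠ 0 := by
  classical
  by_contra! hzero
  have hx : reconstructionMap M S (Pi.single i (Pi.single c 1)) = reconstructionMap M S 0 := by
    have hji (j : {j : ι // j ∈ S}) : j.1 ≠ i := fun h => hi (h ▸ j.2)
    refine Prod.ext (funext fun j => ?_) (funext fun j => ?_)
    · simp [reconstructionMap, hji j]
    · simp [reconstructionMap, Pi.single_apply, apply_ite, hji j, hzero j j.2]
  simpa using congr_fun₂ (hS hx) i c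

theorem exists_row_ne_zero_of_injective_reconstructionMap
    (hS : Function.Injective (reconstructionMap M S))
    (hdim : (Fintype.card ι - #S) * Fintype.card α = #S * Fintype.card β)
    {j : ι} (hj : j ∈ S) (r : β) : ∃ i ∉ S, (M i j).row r ≠ 0 := by
  classical
  by_contra! hzero
  have hfinrank : finrank F (ι → α → F) =
      finrank F (({j : ι // j ∈ S} → α → F) × ({j : ι // j ∈ S} → β → F)) := by
    have hcard : #S ≤ Fintype.card ι := card_le_univ S
    simp only [finrank_prod, finrank_pi_fintype, sum_const,
      card_univ, Fintype.card_coe, smul_eq_mul, finrank_self, mul_one]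
    rw [← hdim, ← add_mul, Nat.add_sub_cancel' hcard]
  obtain ⟨x, hx⟩ := (LinearMap.injective_iff_surjective_of_finrank_eq_finrank hfinrank).1 hS
    (0, Pi.single ⟨j, hj⟩ (Pi.single r 1))
  have hdata : ∀ i ∈ S, x i = 0 := fun i hi => congr_fun (congr_arg Prod.fst hx) ⟨i, hi⟩
  have hterm : ∀ i, (M i j).mulVec (x i) r = 0 := by
    intro i
    by_cases hi : i ∈ S
    · simp only [hdata i hi, Matrix.mulVec_zero, Pi.zero_apply]
    · show (M i j).row r ⬝ᵥ x i = 0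
      rw [hzero i hi, zero_dotProduct]
  have hparity := congr_fun₂ (congr_arg Prod.snd hx) ⟨j, hj⟩ r
  simp only [reconstructionMap, LinearMap.coe_mk, AddHom.coe_mk, Finset.sum_apply, hterm,
    sum_const_zero, Pi.single_eq_same] at hparity
  exact zero_ne_one hparity

variable [DecidableEq F] {k : ℕ}

theorem card_sub_le_card_filter_col_ne_zero
    (hrec : ∀ S : Finset ι, #S = k → Function.Injective (reconstructionMap M S))
    (i : ι) (c : α) :
    Fintype.card ι - k ≤ #{j ∈ univ.erase i | (M i j).col c ≠ 0} := by
  have hzero : #{j ∈ univ.erase i | ¬(M i j).col c ≠ 0} < k := by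
    by_contra! hk
    obtain ⟨S, hSzero, hSk⟩ := exists_subset_card_eq hk
    have hiS : i ∉ S := fun hi => by simpa using (mem_filter.1 (hSzero hi)).1
    obtain ⟨j, hj, hcol⟩ := exists_col_ne_zero_of_injective_reconstructionMap (hrec S hSk) hiS c
    exact hcol (mem_filter.1 (hSzero hj)).2
  have hsplit := card_filter_add_card_filter_not (s := univ.erase i) (fun j => (M i j).col c ≠ 0)
  rw [card_erase_of_mem (mem_univ i), card_univ] at hsplit
  omega

theorem le_card_filter_row_ne_zero
    (hrec : ∀ S : Finset ι, #S = k → Function.Injective (reconstructionMap M S))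
    (hdim : (Fintype.card ι - k) * Fintype.card α = k * Fintype.card β)
    (hk : k ≤ Fintype.card ι) (j : ι) (r : β) :
    k ≤ #{i ∈ univ.erase j | (M i j).row r ≠ 0} := by
  set Y := {i ∈ univ.erase j | (M i j).row r ≠ 0}
  by_contra! hY
  have hjY : j ∉ Y := by simp [Y]
  obtain ⟨S, hYS, hSk⟩ := exists_superset_card_eq (s := insert j Y) (n := k)
    (by rw [card_insert_of_notMem hjY]; omega) hk
  obtain ⟨i, hiS, hrow⟩ := exists_row_ne_zero_of_injective_reconstructionMap (hrec S hSk)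
    (hSk ▸ hdim) (hYS (mem_insert_self j Y)) r
  have hij : i ≠ j := fun h => hiS (h ▸ hYS (mem_insert_self j Y))
  exact hiS (hYS (mem_insert_of_mem (by simp [Y, hij, hrow])))

theorem card_mul_le_sum_card_nonzeroCols
    (hrec : ∀ S : Finset ι, #S = k → Function.Injective (reconstructionMap M S)) :
    Fintype.card ι * (Fintype.card α * (Fintype.card ι - k)) ≤
      ∑ i, ∑ j ∈ univ.erase i, #(M i j).nonzeroCols := by
  calc _ = ∑ _i : ι, ∑ _c : α, (Fintype.card ι - k) := by simp
    _ ≤ ∑ i, ∑ c, #{j ∈ univ.erase i | (M i j).col c ≠ 0} :=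
      sum_le_sum fun i _ => sum_le_sum fun c _ => card_sub_le_card_filter_col_ne_zero hrec i c
    _ = _ := sum_congr rfl fun i _ =>
      (sum_card_bipartiteAbove_eq_sum_card_bipartiteBelow (r := fun j c => (M i j).col c ≠ 0)).symm

theorem card_mul_le_sum_card_nonzeroRows
    (hrec : ∀ S : Finset ι, #S = k → Function.Injective (reconstructionMap M S))
    (hdim : (Fintype.card ι - k) * Fintype.card α = k * Fintype.card β)
    (hk : k ≤ Fintype.card ι) :
    Fintype.card ι * (Fintype.card β * k) ≤ ∑ i, ∑ j ∈ univ.erase i, #(M i j).nonzeroRows := by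
  calc _ = ∑ _j : ι, ∑ _r : β, k := by simp
    _ ≤ ∑ j, ∑ r, #{i ∈ univ.erase j | (M i j).row r ≠ 0} :=
      sum_le_sum fun j _ => sum_le_sum fun r _ => le_card_filter_row_ne_zero hrec hdim hk j r
    _ = ∑ j, ∑ i ∈ univ.erase j, #(M i j).nonzeroRows := sum_congr rfl fun j _ =>
      (sum_card_bipartiteAbove_eq_sum_card_bipartiteBelow (r := fun i r => (M i j).row r ≠ 0)).symm
    _ = _ := sum_comm' fun j i => by simp [ne_comm]

theorem le_sum_card_support
    (hrec : ∀ S : Finset ι, #S = k → Function.Injective (reconstructionMap M S))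
    {u : ℕ} (hα : Fintype.card α = k * u) (hβ : Fintype.card β = (Fintype.card ι - k) * u)
    (hrank : ∀ i j, i ≠ j → (M i j).rank = u) (hk1 : 1 ≤ k) (hk2 : k + 2 ≤ Fintype.card ι) :
    Fintype.card ι * Fintype.card α * (Fintype.card ι - k) + Fintype.card ι * ((k - 1) * u) ≤
      ∑ i, ∑ j ∈ univ.erase i, #(M i j).support := by
  have hcols := card_mul_le_sum_card_nonzeroCols hrec
  have hrows := card_mul_le_sum_card_nonzeroRows hrec (by rw [hα, hβ]; ring) (by omega)
  have hmatrix : ∑ i, ∑ j ∈ univ.erase i, (#(M i j).nonzeroCols + #(M i j).nonzeroRows) ≤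
      ∑ i, ∑ j ∈ univ.erase i, (#(M i j).support + u) :=
    sum_le_sum fun i _ => sum_le_sum fun j hj =>
      hrank i j (ne_of_mem_erase hj).symm ▸ (M i j).card_nonzeroCols_add_card_nonzeroRows_le
  simp only [sum_add_distrib, sum_const, card_erase_of_mem (mem_univ _), card_univ,
    smul_eq_mul] at hmatrix
  have hkey : Fintype.card ι * ((k - 1) * u) + Fintype.card ι * ((Fintype.card ι - 1) * u) ≤
      Fintype.card ι * (Fintype.card β * k) := by
    rw [hβ, ← Nat.mul_add, ← Nat.add_mul, mul_right_comm]
    exact Nat.mul_le_mul_left _ <|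
      Nat.mul_le_mul_right u (Nat.sub_one_add_sub_one_le_sub_mul hk1 hk2)
  rw [mul_assoc]
  omega

end ArrayCode

/-- Lower bound on the update complexity of `(n,k,m·1)` MR-MUB codes: the total
number of nonzero entries of the construction matrices is at least
`n·m·(n-k) + n·((k-1)·m/k)`, i.e. `θ ≥ (n-k) + (k-1)/k`. -/
theorem stmt9 {F : Type*} [Field F] [DecidableEq F] (n k m : ℕ)
    (hk1 : 1 ≤ k) (hk2 : k ≤ n - 2) (hdvd : k ∣ m)
    (M : Fin n → Fin n → Matrix (Fin ((n - k) * m / k)) (Fin m) F)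
    (hrank : ∀ i j : Fin n, i ≠ j → (M i j).rank = m / k)
    (hrec : ∀ S : Finset (Fin n), S.card = k →
      Function.Injective fun x : Fin n → Fin m → F =>
        ((fun j : {j : Fin n // j ∈ S} => x j.1),
         (fun j : {j : Fin n // j ∈ S} =>
           ∑ i ∈ Finset.univ.erase j.1, (M i j.1).mulVec (x i)))) :
    n * m * (n - k) + n * ((k - 1) * m / k) ≤
      ∑ i, ∑ j ∈ Finset.univ.erase i,
        (Finset.univ.filter
          (fun rc : Fin ((n - k) * m / k) × Fin m => M i j rc.1 rc.2 ≠ 0)).card := by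
  obtain ⟨u, rfl⟩ := hdvd
  have hk0 : 0 < k := hk1
  have hdiv (a : ℕ) : a * (k * u) / k = a * u := by
    rw [mul_left_comm, Nat.mul_div_cancel_left _ hk0]
  rw [Nat.mul_div_cancel_left u hk0] at hrank
  rw [hdiv]
  have hbound := le_sum_card_support hrec (Fintype.card_fin _) (by simp [hdiv]) hrank hk1
    (by simp; omega)
  simpa [Matrix.support] using hbound
end

section
/- Let n, k ∈ ℕ with 1 ≤ k ≤ n−1 and m, p : [n] → ℕ. The following are equivalent: (a) there exists a family of nonnegative integers (γ_{i,j})_{i≠j∈[n]} such that for every E ⊆ [n] with |E| = n−k, both (i) Σ_{j∉E} γ_{i,j} ≥ m_i for every i ∈ E, and (ii) Σ_{i∈E} m_i ≤ Σ_{j∉E} min( p_j , Σ_{i∈E} γ_{i,j} ); (b) for every E ⊆ [n] with |E| = n−k, Σ_{i∈E} m_i ≤ Σ_{j∉E} p_j. -/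
/-- Paper's Lemma 5: existence of a family `γ` satisfying constraints (x26) and
(x27) for every `E` of size `n-k` is equivalent to the Singleton-type condition
`∑_{i ∈ E} m i ≤ ∑_{j ∉ E} p j` for every such `E`. -/
theorem stmt14 (n k : ℕ) (hk1 : 1 ≤ k) (hk2 : k ≤ n - 1) (m p : Fin n → ℕ) :
    (∃ γ : Fin n → Fin n → ℕ,
        ∀ E : Finset (Fin n), E.card = n - k →
          (∀ i ∈ E, m i ≤ ∑ j ∈ Eᶜ, γ i j) ∧
          (∑ i ∈ E, m i ≤ ∑ j ∈ Eᶜ, min (p j) (∑ i ∈ E, γ i j)))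
    ↔ (∀ E : Finset (Fin n), E.card = n - k →
        ∑ i ∈ E, m i ≤ ∑ j ∈ Eᶜ, p j) := by
  have hn : k + 1 ≤ n := by omega
  constructor
  · rintro ⟨γ, hγ⟩ E hE
    refine (hγ E hE).2.trans (Finset.sum_le_sum fun j _ => min_le_left _ _)
  · intro hb
    refine ⟨fun i j => max (m i) (p j), fun E hE => ?_⟩
    have hEcard : E.card = n - k := hE
    have hEc : Eᶜ.card = k := by
      have := Finset.card_compl E
      simp [Fintype.card_fin, hEcard] at this
      omega
    have hEcne : Eᶜ.Nonempty := by
      rw [← Finset.card_pos, hEc]; omega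
    have hEne : E.Nonempty := by
      rw [← Finset.card_pos, hEcard]; omega
    constructor
    · intro i hi
      obtain ⟨j, hj⟩ := hEcne
      calc m i ≤ max (m i) (p j) := le_max_left _ _
        _ ≤ ∑ j ∈ Eᶜ, max (m i) (p j) := Finset.single_le_sum (f := fun j => max (m i) (p j)) (fun _ _ => Nat.zero_le _) hj
    · have hmin : ∀ j ∈ Eᶜ, min (p j) (∑ i ∈ E, max (m i) (p j)) = p j := by
        intro j _
        obtain ⟨i, hi⟩ := hEne
        have : p j ≤ ∑ i ∈ E, max (m i) (p j) :=
          le_trans (le_max_right (m i) (p j))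
            (Finset.single_le_sum (f := fun i => max (m i) (p j)) (fun _ _ => Nat.zero_le _) hi)
        omega
      rw [Finset.sum_congr rfl hmin]
      exact hb E hE
end

section
/- Let N, k, m ∈ ℕ with 1 ≤ k ≤ N, and let g : [N] → ℕ satisfy Σ_{j∈S} g_j ≥ m for every subset S ⊆ [N] with |S| = k. Then Σ_{j=1}^{N} g_j ≥ m + (N−k)·⌈m/k⌉. -/
/-- Per-node lower bound on the outgoing update traffic: if every `k` of the `N`
values `g j` sum to at least `m`, then `∑ j, g j ≥ m + (N-k)·⌈m/k⌉`. -/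
theorem stmt15 (N k m : ℕ) (hk1 : 1 ≤ k) (hk2 : k ≤ N) (g : Fin N → ℕ)
    (h : ∀ S : Finset (Fin N), S.card = k → m ≤ ∑ j ∈ S, g j) :
    m + (N - k) * ⌈(m : ℚ) / (k : ℚ)⌉₊ ≤ ∑ j, g j := by
  set σ := Tuple.sort g with hσ
  set g' : Fin N → ℕ := g ∘ σ with hg'
  have hmono : Monotone g' := Tuple.monotone_sort g
  have hsum : ∑ j, g' j = ∑ j, g j := Equiv.sum_comp σ g
  have h' : ∀ S : Finset (Fin N), S.card = k → m ≤ ∑ j ∈ S, g' j := by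
    intro S hS
    have : ∑ j ∈ S, g' j = ∑ j ∈ S.image σ, g j := by
      rw [Finset.sum_image (fun a _ b _ hab => σ.injective hab)]
      rfl
    rw [this]
    exact h _ (by rw [Finset.card_image_of_injective _ σ.injective, hS])
  rw [← hsum]
  set c : ℕ := ⌈(m : ℚ) / (k : ℚ)⌉₊ with hc
  -- index k-1
  have hk1N : k - 1 < N := lt_of_lt_of_le (Nat.sub_lt hk1 one_pos) hk2
  set i0 : Fin N := ⟨k - 1, hk1N⟩ with hi0
  set S₀ : Finset (Fin N) := Finset.univ.filter (fun j => (j : ℕ) < k) with hS₀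
  have hcard : S₀.card = k := by
    rw [hS₀]
    have : (Finset.univ.filter (fun j : Fin N => (j : ℕ) < k)) =
        Finset.map (Fin.castLEEmb hk2) Finset.univ := by
      ext j
      simp [Finset.mem_map, Fin.castLEEmb, Fin.castLE]
      constructor
      · intro hj; exact ⟨⟨j, hj⟩, by simp [Fin.ext_iff]⟩
      · rintro ⟨a, ha⟩; rw [← ha]; exact a.isLt
    rw [this]; simp
  have hi0S : i0 ∈ S₀ := by
    simp [hS₀, hi0]
    omega
  -- g' i0 ≥ c
  have hmax : ∀ j ∈ S₀, g' j ≤ g' i0 := by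
    intro j hj
    apply hmono
    simp [hS₀] at hj
    simp [hi0, Fin.le_def]
    omega
  have hsum0 : m ≤ ∑ j ∈ S₀, g' j := h' S₀ hcard
  have hkgi : m ≤ k * g' i0 := by
    calc m ≤ ∑ j ∈ S₀, g' j := hsum0
    _ ≤ ∑ _j ∈ S₀, g' i0 := Finset.sum_le_sum hmax
    _ = k * g' i0 := by rw [Finset.sum_const, hcard, smul_eq_mul]
  have hci0 : c ≤ g' i0 := by
    rw [hc, Nat.ceil_le, div_le_iff₀ (by positivity)]
    calc (m : ℚ) ≤ (k * g' i0 : ℕ) := by exact_mod_cast hkgi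
    _ = (g' i0 : ℚ) * k := by push_cast; ring
  -- split the sum
  have hcompl : ∀ j ∈ S₀ᶜ, c ≤ g' j := by
    intro j hj
    refine hci0.trans (hmono ?_)
    simp [hS₀] at hj
    simp [hi0, Fin.le_def]
    omega
  have hcardc : S₀ᶜ.card = N - k := by
    rw [Finset.card_compl, hcard]; simp
  calc m + (N - k) * c ≤ (∑ j ∈ S₀, g' j) + ∑ j ∈ S₀ᶜ, g' j := by
        apply Nat.add_le_add hsum0
        calc (N - k) * c = ∑ _j ∈ S₀ᶜ, c := by rw [Finset.sum_const, hcardc, smul_eq_mul]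
        _ ≤ ∑ j ∈ S₀ᶜ, g' j := Finset.sum_le_sum hcompl
    _ = ∑ j, g' j := Finset.sum_add_sum_compl S₀ g'
end

section
/- Let F be a field and n, k, m ∈ ℕ with 1 ≤ k ≤ n−1 and k ∣ m, and set p = (n−k)·m/k. For all i ≠ j ∈ [n] let A_{i,j} ∈ F^{(m/k)×m} and B_{i,j} ∈ F^{p×(m/k)} be given, and let the parity vector of node j be P_j(x) = Σ_{i≠j} B_{i,j}·A_{i,j}·x_i for data vectors x_i ∈ F^m. Suppose the code is reconstructible from every S ⊆ [n] with |S| = k. Then for every j ∈ [n] and every E ⊆ [n]∖{j} with |E| = n−k, writing E = {e_1,…,e_{n−k}}, the p×p matrix [B_{e_1,j} B_{e_2,j} … B_{e_{n−k},j}] obtained by horizontally juxtaposing the blocks B_{e,j} is invertible. -/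
/-- For an `(n,k,m·1)` MR-MUB code with encoding matrices `A i j`, `B i j`
(construction matrices `M i j = B i j * A i j` of inner dimension `m/k`), for
every node `j` and every `E ⊆ [n]∖{j}` with `|E| = n-k`, the square matrix
obtained by horizontally juxtaposing the blocks `B e j`, `e ∈ E`, is invertible
(its associated linear map is bijective). -/
theorem stmt18 {F : Type*} [Field F] (n k m : ℕ)
    (hk1 : 1 ≤ k) (hk2 : k ≤ n - 1) (hdvd : k ∣ m)
    (A : Fin n → Fin n → Matrix (Fin (m / k)) (Fin m) F)
    (B : Fin n → Fin n → Matrix (Fin ((n - k) * (m / k))) (Fin (m / k)) F)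
    (hrec : ∀ S : Finset (Fin n), S.card = k →
      Function.Injective fun x : Fin n → Fin m → F =>
        ((fun j : {j : Fin n // j ∈ S} => x j.1),
         (fun j : {j : Fin n // j ∈ S} =>
           ∑ i ∈ Finset.univ.erase j.1, (B i j.1 * A i j.1).mulVec (x i)))) :
    ∀ (j : Fin n) (E : Finset (Fin n)), E ⊆ Finset.univ.erase j → E.card = n - k →
      Function.Bijective (Matrix.mulVecLin
        (Matrix.of fun (r : Fin ((n - k) * (m / k)))
            (ec : (e : {e : Fin n // e ∈ E}) × Fin (m / k)) =>
          B ec.1.1 j r ec.2)) := by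
  intro j E hE hEcard
  have hkn : k ≤ n := le_trans hk2 (Nat.sub_le n 1)
  have hm : k * (m / k) = m := Nat.mul_div_cancel' hdvd
  set S : Finset (Fin n) := Finset.univ \ E with hS
  have hjE : j ∉ E := fun hj => by simpa using hE hj
  have hjS : j ∈ S := by simp [hS, hjE]
  have hScard : S.card = k := by
    rw [hS, Finset.card_sdiff_of_subset (Finset.subset_univ E), hEcard, Finset.card_univ,
      Fintype.card_fin, Nat.sub_sub_self hkn]
  -- the reconstruction map as a linear map
  let L : (Fin n → Fin m → F) →ₗ[F]
      (({j : Fin n // j ∈ S} → Fin m → F)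
        × ({j : Fin n // j ∈ S} → Fin ((n - k) * (m / k)) → F)) :=
    { toFun := fun x : Fin n → Fin m → F =>
        ((fun j : {j : Fin n // j ∈ S} => x j.1),
         (fun j : {j : Fin n // j ∈ S} =>
           ∑ i ∈ Finset.univ.erase j.1, (B i j.1 * A i j.1).mulVec (x i)))
      map_add' := by
        intro x y
        refine Prod.ext (funext fun j0 => rfl) (funext fun j0 => ?_)
        simp [Matrix.mulVec_add, Finset.sum_add_distrib]
      map_smul' := by
        intro c x
        refine Prod.ext rfl (funext fun j0 => ?_)
        simp only [Prod.smul_snd, Pi.smul_apply, RingHom.id_apply,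
          Matrix.mulVec_smul, Finset.smul_sum] }
  have hinj : Function.Injective L := hrec S hScard
  have hfr : Module.finrank F (Fin n → Fin m → F)
      = Module.finrank F (({j : Fin n // j ∈ S} → Fin m → F)
        × ({j : Fin n // j ∈ S} → Fin ((n - k) * (m / k)) → F)) := by
    have hcS : Fintype.card {j : Fin n // j ∈ S} = k := by
      rw [Fintype.card_coe, hScard]
    have hfun : ∀ (ι : Type) (_ : Fintype ι) (q : ℕ),
        Module.finrank F (ι → Fin q → F) = Fintype.card ι * q := by
      intro ι _ q
      rw [Module.finrank_pi_fintype]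
      simp [Module.finrank_fintype_fun_eq_card, Finset.card_univ, mul_comm]
    rw [Module.finrank_prod, hfun _ _ m, hfun _ _ m,
      hfun _ _ ((n - k) * (m / k)), Fintype.card_fin, hcS]
    have h1 : k * ((n - k) * (m / k)) = (n - k) * m := by
      rw [mul_left_comm, hm]
    rw [h1, ← Nat.add_mul, Nat.add_sub_cancel' hkn]
  have hsurj : Function.Surjective L :=
    (LinearMap.injective_iff_surjective_of_finrank_eq_finrank hfr).mp hinj
  -- surjectivity of the juxtaposed matrix
  have hMsurj : Function.Surjective (Matrix.mulVecLin
      (Matrix.of fun (r : Fin ((n - k) * (m / k)))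
          (ec : (e : {e : Fin n // e ∈ E}) × Fin (m / k)) =>
        B ec.1.1 j r ec.2)) := by
    intro y
    obtain ⟨x, hx⟩ := hsurj (0, fun i : {i : Fin n // i ∈ S} =>
        if i.1 = j then y else 0)
    have h1 : (fun j0 : {j : Fin n // j ∈ S} => x j0.1) = 0 :=
      congrArg Prod.fst hx
    have h2 : (fun j0 : {j : Fin n // j ∈ S} =>
        ∑ i ∈ Finset.univ.erase j0.1, (B i j0.1 * A i j0.1).mulVec (x i))
        = fun i : {i : Fin n // i ∈ S} => if i.1 = j then y else 0 :=
      congrArg Prod.snd hx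
    have hx0 : ∀ i ∈ S, x i = 0 := fun i hi => congrFun h1 ⟨i, hi⟩
    have hxj : ∑ i ∈ Finset.univ.erase j, (B i j * A i j).mulVec (x i) = y := by
      have := congrFun h2 ⟨j, hjS⟩
      simpa using this
    refine ⟨fun ec => (A ec.1.1 j).mulVec (x ec.1.1) ec.2, ?_⟩
    funext r
    have step1 : Matrix.mulVecLin
        (Matrix.of fun (r : Fin ((n - k) * (m / k)))
            (ec : (e : {e : Fin n // e ∈ E}) × Fin (m / k)) =>
          B ec.1.1 j r ec.2)
        (fun ec => (A ec.1.1 j).mulVec (x ec.1.1) ec.2) r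
        = ∑ e : {e : Fin n // e ∈ E}, ((B e.1 j * A e.1 j).mulVec (x e.1)) r := by
      rw [Matrix.mulVecLin_apply]
      rw [show (Matrix.of fun (r : Fin ((n - k) * (m / k)))
            (ec : (e : {e : Fin n // e ∈ E}) × Fin (m / k)) =>
          B ec.1.1 j r ec.2).mulVec
          (fun ec => (A ec.1.1 j).mulVec (x ec.1.1) ec.2) r
          = ∑ ec : (e : {e : Fin n // e ∈ E}) × Fin (m / k),
            B ec.1.1 j r ec.2 * (A ec.1.1 j).mulVec (x ec.1.1) ec.2 from rfl]
      rw [← Finset.univ_sigma_univ, Finset.sum_sigma]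
      refine Finset.sum_congr rfl fun e _ => ?_
      rw [← Matrix.mulVec_mulVec]
      rfl
    rw [step1]
    have step2 : ∑ e : {e : Fin n // e ∈ E}, ((B e.1 j * A e.1 j).mulVec (x e.1)) r
        = ∑ e ∈ E, ((B e j * A e j).mulVec (x e)) r :=
      Finset.sum_coe_sort E (fun e => ((B e j * A e j).mulVec (x e)) r)
    rw [step2]
    have step3 : ∑ e ∈ E, ((B e j * A e j).mulVec (x e)) r
        = ∑ e ∈ Finset.univ.erase j, ((B e j * A e j).mulVec (x e)) r := by
      refine Finset.sum_subset hE fun i hi hiE => ?_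
      have : x i = 0 := hx0 i (by simp [hS, hiE])
      simp [this]
    rw [step3]
    simpa using congrFun hxj r
  -- square: surjective implies bijective
  have hfr2 : Module.finrank F (((e : {e : Fin n // e ∈ E}) × Fin (m / k)) → F)
      = Module.finrank F (Fin ((n - k) * (m / k)) → F) := by
    simp only [Module.finrank_fintype_fun_eq_card, Fintype.card_sigma,
      Fintype.card_fin, Finset.sum_const, Finset.card_univ, Fintype.card_coe,
      hEcard, smul_eq_mul]
  exact ⟨(LinearMap.injective_iff_surjective_of_finrank_eq_finrank hfr2).mpr hMsurj,
    hMsurj⟩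
end
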